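/- arXiv:2207.03165 — 8 statements merged into one kernel-verified Lean document; each statement's English description precedes it below -/
import Mathlib

section
/- Let k ≥ 2 be a natural number. Then n(k,3) = 2k+1; that is, every element of the alternating group A_{2k+1} can be written as a product of k many 3-cycles of S_{2k+1}, and for every n > 2k+1 there exists an element of A_n that cannot be written as a product of k many 3-cycles of S_n. -/
/-!
Upper bound: an even permutation moving `s` points is a product of at most `s / 2` three-cycles
(peel off a 3-cycle along a cycle of length `≥ 3`, or two 3-cycles replacing a pair of disjoint
transpositions), and a nonempty product of 3-cycles can be lengthened one factor at a time, since
`c = c² * c²` for a 3-cycle `c`.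

Lower bound: if `P` is disjoint from `σ P`, then multiplying `σ` by a 3-cycle destroys this for at
most one point of `P`, so `#P ≤ k` whenever `σ` is a product of `k` three-cycles. The even
permutation `(0 1 ⋯ 2k+1) * (1 3)` of `Fin n`, `n ≥ 2k + 2`, sends each `2i ≤ 2k` to `2i + 1`,
so the `k + 1` even numbers up to `2k` form such a `P`.
-/

open Equiv

/-- `σ ∈ S_n` is a product of `k` many `l`-cycles. -/
def IsProdOfCycles (n k l : ℕ) (σ : Equiv.Perm (Fin n)) : Prop :=
  ∃ c : Fin k → Equiv.Perm (Fin n),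
    (∀ i, (c i).IsCycle ∧ (c i).support.card = l) ∧ σ = (List.ofFn c).prod

open Finset

section

variable {α : Type*} [Fintype α] [DecidableEq α]

theorem card_support_inv_mul_add_card_le {σ ρ : Perm α} {T : Finset α}
    (hT : T ⊆ σ.support) (hρ : ρ.support ⊆ σ.support) (heq : ∀ x ∈ T, ρ x = σ x) :
    #(ρ⁻¹ * σ).support + #T ≤ #σ.support := by
  have hsub : (ρ⁻¹ * σ).support ⊆ σ.support \ T := by
    intro x hx
    refine mem_sdiff.mpr ⟨?_, fun hxT => Perm.mem_support.mp hx ?_⟩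
    · have := Perm.support_mul_le ρ⁻¹ σ hx
      rw [Perm.support_inv, sup_eq_union, mem_union] at this
      exact this.elim (fun h => hρ h) id
    · simp [Perm.mul_apply, ← heq x hxT]
  have := card_le_card hsub
  rw [card_sdiff_of_subset hT] at this
  have := card_le_card hT
  omega

theorem support_swap_mul_swap_subset {s : Finset α} {a b c d : α} (ha : a ∈ s) (hb : b ∈ s)
    (hc : c ∈ s) (hd : d ∈ s) : (swap a b * swap c d).support ⊆ s := by
  have support_swap_subset : ∀ {x y}, x ∈ s → y ∈ s → (swap x y).support ⊆ s :=
    fun hx hy z hz => by_contra fun h => Perm.mem_support.mp hz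
      (swap_apply_of_ne_of_ne (fun e => h (e ▸ hx)) (fun e => h (e ▸ hy)))
  exact (Perm.support_mul_le _ _).trans
    (union_subset (support_swap_subset ha hb) (support_swap_subset hc hd))

theorem exists_mem_support_ne_ne_of_mem_alternatingGroup {σ : Perm α}
    (hσ : σ ∈ alternatingGroup α) {a : α} (ha : a ∈ σ.support) :
    ∃ c ∈ σ.support, c ≠ a ∧ c ≠ σ a := by
  -- otherwise `σ` is the transposition `swap a (σ a)`, which is odd
  by_contra! h
  have hsub : σ.support ⊆ {a, σ a} := fun x hx => by
    by_cases hxa : x = a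
    · simp [hxa]
    · simp [h x hx hxa]
  have h2 : #σ.support = 2 := by
    have := (card_le_card hsub).trans card_le_two
    have := σ.card_support_ne_one
    have := card_pos.mpr ⟨a, ha⟩
    omega
  have := (Perm.card_support_eq_two.mp h2).sign_eq
  rw [Perm.mem_alternatingGroup.mp hσ] at this
  exact absurd this (by decide)

theorem exists_isThreeCycle_card_support_inv_mul_add_two_le {σ : Perm α} {a : α}
    (h₁ : σ a ≠ a) (h₂ : σ (σ a) ≠ a) :
    ∃ τ : Perm α, τ.IsThreeCycle ∧ #(τ⁻¹ * σ).support + 2 ≤ #σ.support := by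
  set b := σ a
  set c := σ b
  have hbc : c ≠ b := fun h => h₁ (σ.injective h)
  have ha : a ∈ σ.support := Perm.mem_support.mpr h₁
  have hb : b ∈ σ.support := Perm.apply_mem_support.mpr ha
  have hc : c ∈ σ.support := Perm.apply_mem_support.mpr hb
  refine ⟨swap a b * swap b c, ?_, ?_⟩
  · rw [swap_comm a b]
    exact Perm.isThreeCycle_swap_mul_swap_same h₁ hbc.symm h₂.symm
  · have heq : ∀ x ∈ ({a, b} : Finset α), (swap a b * swap b c) x = σ x := by
      simp only [mem_insert, mem_singleton, forall_eq_or_imp, forall_eq, Perm.mul_apply]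
      constructor
      · rw [swap_apply_of_ne_of_ne h₁.symm h₂.symm, swap_apply_left]
      · rw [swap_apply_left, swap_apply_of_ne_of_ne h₂ hbc]
    have := card_support_inv_mul_add_card_le (by simp [insert_subset_iff, ha, hb])
      (support_swap_mul_swap_subset ha hb hb hc) heq
    rwa [card_pair h₁.symm] at this

theorem exists_isThreeCycle_mul_isThreeCycle_card_support_inv_mul_add_four_le {σ : Perm α}
    (hσ : σ ∈ alternatingGroup α) (hσ₁ : σ ≠ 1) (hinv : ∀ x, σ (σ x) = x) :
    ∃ τ₁ τ₂ : Perm α, τ₁.IsThreeCycle ∧ τ₂.IsThreeCycle ∧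
      #((τ₁ * τ₂)⁻¹ * σ).support + 4 ≤ #σ.support := by
  obtain ⟨a, ha⟩ := nonempty_iff_ne_empty.mpr (mt Perm.support_eq_empty_iff.mp hσ₁)
  set b := σ a
  have hab : a ≠ b := (Perm.mem_support.mp ha).symm
  have hb : b ∈ σ.support := Perm.apply_mem_support.mpr ha
  obtain ⟨c, hc, hca, hcb⟩ : ∃ c ∈ σ.support, c ≠ a ∧ c ≠ b :=
    exists_mem_support_ne_ne_of_mem_alternatingGroup hσ ha
  set d := σ c
  have hd : d ∈ σ.support := Perm.apply_mem_support.mpr hc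
  have hcd : c ≠ d := (Perm.mem_support.mp hc).symm
  have hda : d ≠ a := fun h => hcb (by rw [← hinv c]; exact congrArg σ h)
  have hdb : d ≠ b := fun h => hca (σ.injective h)
  refine ⟨swap a b * swap b c, swap b c * swap c d, ?_, ?_, ?_⟩
  · rw [swap_comm a b]
    exact Perm.isThreeCycle_swap_mul_swap_same hab.symm hcb.symm hca.symm
  · rw [swap_comm b c]
    exact Perm.isThreeCycle_swap_mul_swap_same hcb hcd hdb.symm
  · have hρ : swap a b * swap b c * (swap b c * swap c d) = swap a b * swap c d := by
      rw [mul_assoc, ← mul_assoc (swap b c), swap_mul_self, one_mul]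
    have heq : ∀ x ∈ ({a, b, c, d} : Finset α), (swap a b * swap c d) x = σ x := by
      simp only [mem_insert, mem_singleton, forall_eq_or_imp, forall_eq, Perm.mul_apply]
      refine ⟨?_, ?_, ?_, ?_⟩
      · rw [swap_apply_of_ne_of_ne hca.symm hda.symm, swap_apply_left]
      · rw [swap_apply_of_ne_of_ne hcb.symm hdb.symm, swap_apply_right, hinv]
      · rw [swap_apply_left, swap_apply_of_ne_of_ne hda hdb]
      · rw [swap_apply_right, swap_apply_of_ne_of_ne hca hcb, hinv]
    have hT : #({a, b, c, d} : Finset α) = 4 := by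
      simp [card_insert_of_notMem, hab, hca.symm, hcb.symm, hda.symm, hdb.symm, hcd]
    have := card_support_inv_mul_add_card_le (by simp [insert_subset_iff, ha, hb, hc, hd])
      (support_swap_mul_swap_subset ha hb hc hd) heq
    rwa [hρ, ← hT]

theorem exists_list_isThreeCycle_card_support_prod_inv_mul_add_le {σ : Perm α}
    (hσ : σ ∈ alternatingGroup α) (hσ₁ : σ ≠ 1) :
    ∃ L : List (Perm α), L ≠ [] ∧ (∀ τ ∈ L, τ.IsThreeCycle) ∧
      #(L.prod⁻¹ * σ).support + 2 * L.length ≤ #σ.support := by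
  by_cases h : ∃ a, σ a ≠ a ∧ σ (σ a) ≠ a
  · obtain ⟨a, h₁, h₂⟩ := h
    obtain ⟨τ, hτ, hcard⟩ := exists_isThreeCycle_card_support_inv_mul_add_two_le h₁ h₂
    exact ⟨[τ], List.cons_ne_nil _ _, by simpa using hτ, by simpa using hcard⟩
  · have hinv : ∀ x, σ (σ x) = x := fun x => by
      by_contra hx
      exact h ⟨x, fun hfix => hx (by rw [hfix, hfix]), hx⟩
    obtain ⟨τ₁, τ₂, h₁, h₂, hcard⟩ :=
      exists_isThreeCycle_mul_isThreeCycle_card_support_inv_mul_add_four_le hσ hσ₁ hinv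
    refine ⟨[τ₁, τ₂], List.cons_ne_nil _ _, by simp [h₁, h₂], ?_⟩
    simpa using hcard

theorem exists_list_isThreeCycle_prod_eq {σ : Perm α} (hσ : σ ∈ alternatingGroup α) :
    ∃ L : List (Perm α), (∀ τ ∈ L, τ.IsThreeCycle) ∧ L.prod = σ ∧
      2 * L.length ≤ #σ.support := by
  induction hn : #σ.support using Nat.strong_induction_on generalizing σ with
  | _ n ih =>
  by_cases hσ₁ : σ = 1
  · exact ⟨[], by simp, by simp [hσ₁], by simp⟩
  obtain ⟨L₀, hne, hL₀, hcard⟩ := exists_list_isThreeCycle_card_support_prod_inv_mul_add_le hσ hσ₁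
  have hmem : L₀.prod⁻¹ * σ ∈ alternatingGroup α :=
    mul_mem (inv_mem <| (alternatingGroup α).list_prod_mem fun τ hτ =>
      (hL₀ τ hτ).mem_alternatingGroup) hσ
  have hlen := List.length_pos_iff.mpr hne
  obtain ⟨L, hL, hprod, hlen'⟩ := ih _ (by omega) hmem rfl
  refine ⟨L₀ ++ L, fun τ hτ => ?_, by simp [hprod], by simp; omega⟩
  exact (List.mem_append.mp hτ).elim (hL₀ τ) (hL τ)

theorem exists_list_isThreeCycle_length_eq_add {L : List (Perm α)} (hL : ∀ τ ∈ L, τ.IsThreeCycle)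
    (hne : L ≠ []) (m : ℕ) :
    ∃ L' : List (Perm α), L'.length = L.length + m ∧ (∀ τ ∈ L', τ.IsThreeCycle) ∧
      L'.prod = L.prod := by
  induction m generalizing L with
  | zero => exact ⟨L, rfl, hL, rfl⟩
  | succ m ih =>
    obtain ⟨c, L, rfl⟩ := List.exists_cons_of_ne_nil hne
    have hc := hL c List.mem_cons_self
    have hcc : c * c * (c * c) = c := by
      rw [show c * c * (c * c) = c ^ 3 * c by simp only [pow_succ, pow_zero, one_mul, mul_assoc],
        ← hc.orderOf, pow_orderOf_eq_one, one_mul]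
    obtain ⟨L', hlen, hL', hprod⟩ := ih (L := c * c :: c * c :: L)
      (by simpa [hc.isThreeCycle_sq] using fun τ hτ => hL τ (List.mem_cons_of_mem c hτ))
      (List.cons_ne_nil _ _)
    refine ⟨L', by simp [hlen]; omega, hL', ?_⟩
    rw [hprod, List.prod_cons, List.prod_cons, ← mul_assoc, hcc, List.prod_cons]

theorem exists_list_isThreeCycle_length_eq {σ : Perm α} (hσ : σ ∈ alternatingGroup α)
    (hα : 2 < Fintype.card α) {k : ℕ} (hk : 2 ≤ k) (hsupp : #σ.support ≤ 2 * k + 1) :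
    ∃ L : List (Perm α), L.length = k ∧ (∀ τ ∈ L, τ.IsThreeCycle) ∧ L.prod = σ := by
  obtain ⟨L, hL, hprod, hlen⟩ := exists_list_isThreeCycle_prod_eq hσ
  obtain ⟨L₀, hne, hlen₀, hL₀, hprod₀⟩ : ∃ L₀ : List (Perm α), L₀ ≠ [] ∧ L₀.length ≤ k ∧
      (∀ τ ∈ L₀, τ.IsThreeCycle) ∧ L₀.prod = σ := by
    rcases L with _ | ⟨τ, L⟩
    · obtain ⟨a, b, c, hab, hac, hbc⟩ := Fintype.two_lt_card_iff.mp hα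
      obtain ⟨τ, hτ⟩ : ∃ τ : Perm α, τ.IsThreeCycle :=
        ⟨_, Perm.isThreeCycle_swap_mul_swap_same hab hac hbc⟩
      refine ⟨[τ, τ⁻¹], List.cons_ne_nil _ _, by simpa using hk, by simp [hτ, hτ.inv], ?_⟩
      simp [← hprod]
    · exact ⟨τ :: L, List.cons_ne_nil _ _, by omega, hL, hprod⟩
  obtain ⟨L', hlen', hL', hprod'⟩ := exists_list_isThreeCycle_length_eq_add hL₀ hne (k - L₀.length)
  exact ⟨L', by omega, hL', hprod'.trans hprod₀⟩

theorem exists_subset_disjoint_image_of_card_support_le {σ τ : Perm α} {m : ℕ}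
    (hτ : #τ.support ≤ 2 * m + 1) {P : Finset α} (hP : Disjoint P (P.image (τ * σ))) :
    ∃ Q ⊆ P, #P ≤ #Q + m ∧ Disjoint Q (Q.image σ) := by
  -- Drop the `x ∈ P` with `σ x ∈ P ∩ S`: they inject into `P ∩ σ P ∩ S`, which has at most `m`
  -- points because `P ∩ S` and `τ (σ P ∩ S)` are disjoint subsets of `S`.
  set S := τ.support
  set R := P.image σ
  refine ⟨P.filter (fun x => σ x ∉ P ∩ S), filter_subset _ _, ?_, ?_⟩
  · have hτR : Disjoint (P ∩ S) ((R ∩ S).image τ) := by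
      rw [disjoint_left]
      intro x hx hxτ
      simp only [mem_image, mem_inter, R] at hxτ
      obtain ⟨_, ⟨⟨y, hy, rfl⟩, -⟩, rfl⟩ := hxτ
      exact disjoint_left.mp hP (mem_inter.mp hx).1 (mem_image_of_mem _ hy)
    have hτS : (R ∩ S).image τ ⊆ S := fun x hx => by
      obtain ⟨y, hy, rfl⟩ := mem_image.mp hx
      exact Perm.apply_mem_support.mpr (mem_inter.mp hy).2
    have hPRS : #(P ∩ S) + #(R ∩ S) ≤ 2 * m + 1 := by
      rw [← card_image_of_injective (R ∩ S) τ.injective, ← card_union_of_disjoint hτR]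
      exact (card_le_card (union_subset inter_subset_right hτS)).trans hτ
    have hbad : #(P.filter fun x => σ x ∈ P ∩ S) ≤ #(P ∩ S ∩ R) := by
      rw [← card_image_of_injective _ σ.injective]
      refine card_le_card fun y hy => ?_
      obtain ⟨x, hx, rfl⟩ := mem_image.mp hy
      rw [mem_filter] at hx
      exact mem_inter.mpr ⟨hx.2, mem_image_of_mem _ hx.1⟩
    have h₁ := card_le_card (inter_subset_left : P ∩ S ∩ R ⊆ P ∩ S)
    have h₂ := card_le_card (show P ∩ S ∩ R ⊆ R ∩ S from fun x hx => by
      simp only [mem_inter] at hx ⊢; exact ⟨hx.2, hx.1.2⟩)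
    have := card_filter_add_card_filter_not (s := P) (fun x => σ x ∈ P ∩ S)
    omega
  · rw [disjoint_left]
    intro y hy hyσ
    obtain ⟨x, hx, rfl⟩ := mem_image.mp hyσ
    simp only [mem_filter, mem_inter, not_and] at hx hy
    have hfix : τ (σ x) = σ x := Perm.notMem_support.mp (hx.2 hy.1)
    exact disjoint_left.mp hP hy.1 (mem_image.mpr ⟨x, hx.1, by rw [Perm.mul_apply, hfix]⟩)

theorem card_le_mul_length_of_disjoint_image {m : ℕ} (L : List (Perm α))
    (hL : ∀ τ ∈ L, #τ.support ≤ 2 * m + 1) {P : Finset α}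
    (hP : Disjoint P (P.image L.prod)) : #P ≤ m * L.length := by
  induction L generalizing P with
  | nil =>
    rw [List.prod_nil, Perm.coe_one, image_id, disjoint_self_iff_empty] at hP
    simp [hP]
  | cons τ L ih =>
    rw [List.prod_cons] at hP
    obtain ⟨Q, -, hPQ, hQ⟩ :=
      exists_subset_disjoint_image_of_card_support_le (hL τ List.mem_cons_self) hP
    have := ih (fun τ' hτ' => hL τ' (List.mem_cons_of_mem τ hτ')) hQ
    rw [List.length_cons]
    nlinarith

end

theorem isProdOfCycles_iff {n k l : ℕ} {σ : Perm (Fin n)} :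
    IsProdOfCycles n k l σ ↔ ∃ L : List (Perm (Fin n)), L.length = k ∧
      (∀ c ∈ L, c.IsCycle ∧ #c.support = l) ∧ L.prod = σ := by
  constructor
  · rintro ⟨c, hc, rfl⟩
    exact ⟨List.ofFn c, List.length_ofFn, List.forall_mem_ofFn_iff.mpr hc, rfl⟩
  · rintro ⟨L, rfl, hL, rfl⟩
    exact ⟨L.get, fun i => hL _ (List.get_mem L i), (List.ofFn_get L).symm ▸ rfl⟩

theorem exists_mem_alternatingGroup_card_eq_disjoint_image {n k : ℕ} (hk : 1 ≤ k)
    (hn : 2 * k + 2 ≤ n) :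
    ∃ σ ∈ alternatingGroup (Fin n), ∃ P : Finset (Fin n), #P = k + 1 ∧ Disjoint P (P.image σ) := by
  let σ := Fin.cycleRange (⟨2 * k + 1, by omega⟩ : Fin n) * swap ⟨1, by omega⟩ ⟨3, by omega⟩
  let e : Fin (k + 1) → Fin n := fun i => ⟨2 * i, by omega⟩
  have he : Function.Injective e := fun i j h => Fin.ext (by simpa [e] using h)
  have hσe : ∀ i, (σ (e i) : ℕ) = 2 * i + 1 := fun i => by
    rw [Perm.mul_apply, swap_apply_of_ne_of_ne (Fin.ne_of_val_ne (show 2 * (i : ℕ) ≠ 1 by omega))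
      (Fin.ne_of_val_ne (show 2 * (i : ℕ) ≠ 3 by omega)),
      Fin.coe_cycleRange_of_lt (show 2 * (i : ℕ) < 2 * k + 1 by omega)]
  refine ⟨σ, ?_, univ.image e, by simp [card_image_of_injective _ he], ?_⟩
  · rw [Perm.mem_alternatingGroup, Perm.sign_mul, Fin.sign_cycleRange,
      Perm.sign_swap (by simp [Fin.ext_iff]), Odd.neg_one_pow ⟨k, rfl⟩]
    rfl
  · rw [disjoint_left]
    rintro _ hx hσx
    obtain ⟨i, -, rfl⟩ := mem_image.mp hx
    obtain ⟨_, hj, hσj⟩ := mem_image.mp hσx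
    obtain ⟨j, -, rfl⟩ := mem_image.mp hj
    have := congrArg Fin.val hσj
    rw [hσe] at this
    simp [e] at this
    omega

theorem n_k_3_eq_two_k_add_one (k : ℕ) (hk : 2 ≤ k) :
    (∀ σ ∈ alternatingGroup (Fin (2 * k + 1)), IsProdOfCycles (2 * k + 1) k 3 σ) ∧
    (∀ n : ℕ, 2 * k + 1 < n →
      ∃ σ ∈ alternatingGroup (Fin n), ¬ IsProdOfCycles n k 3 σ) := by
  constructor
  · intro σ hσ
    obtain ⟨L, hlen, hL, hprod⟩ := exists_list_isThreeCycle_length_eq hσ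
      (by simp; omega) hk (by simpa using card_le_univ σ.support)
    exact isProdOfCycles_iff.mpr
      ⟨L, hlen, fun c hc => ⟨(hL c hc).isCycle, (hL c hc).card_support⟩, hprod⟩
  · intro n hn
    obtain ⟨σ, hσ, P, hP, hdisj⟩ := exists_mem_alternatingGroup_card_eq_disjoint_image
      (by omega : 1 ≤ k) (by omega : 2 * k + 2 ≤ n)
    refine ⟨σ, hσ, fun h => ?_⟩
    obtain ⟨L, rfl, hL, rfl⟩ := isProdOfCycles_iff.mp h
    have := card_le_mul_length_of_disjoint_image (m := 1) L (fun τ hτ => (hL τ hτ).2.le) hdisj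
    omega
end

section
/- Given natural numbers n, l ≥ 2, every element of A_n can be written as a product of two l-cycles of S_n if and only if ⌊3n/4⌋ ≤ l ≤ n, or n = 4 and l = 2. -/
/-!
Write `m σ` for the number of points moved by `σ` and `r σ` for its number of nontrivial cycles,
so that `sign σ = (-1) ^ (m σ + r σ)`.

If `σ = p * q` for cycles `p`, `q` with disjoint supports, `σ` has cycle type `{|p|, |q|}`. If
the supports meet, every nonempty `σ`-invariant subset of `supp p ∪ supp q` meets
`supp p ∩ supp q`; counting the `σ`-orbits there gives `m σ + r σ ≤ |p| + |q|`. An even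
permutation of `n` points has `m σ + r σ ≤ 2 ⌊3n/4⌋`, with equality for products of
transpositions and at most one 3- or 4-cycle; these (and a 5-cycle when `l = 2`) are the
counterexamples below the bound.

Conversely, induction over the disjoint cycles writes every `σ ≠ 1` that is not a transposition as
`p * q` with meeting cycles of total length `m σ + r σ`. Since `p * q = (p * s) * (s * q)` for a
transposition `s`, one can move a point from the longer cycle to the shorter one until the lengths
agree, and then enlarge both cycles by one point at a time up to `l`. That each new factor is a
cycle is checked by counting: it has at most two cycles, and the parity of `m + r` rules out two.
-/

open Equiv

open Finset

namespace Equiv.Perm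

variable {α : Type*}

theorem SameCycle.mul_right_of_commute {c d : Perm α} (hcd : Commute c d) {x y : α}
    (hx : d x = x) (hxy : c.SameCycle x y) : (c * d).SameCycle x y := by
  obtain ⟨i, rfl⟩ := hxy
  exact ⟨i, by rw [hcd.mul_zpow, mul_apply, zpow_apply_eq_self_of_apply_eq_self hx]⟩

variable [DecidableEq α]

theorem sameCycle_mul_swap_pow (π : Perm α) (a b : α) (j : ℕ) :
    (π * swap a b).SameCycle a ((π ^ j) a) ∨ (π * swap a b).SameCycle b ((π ^ j) a) := by
  induction j with
  | zero => exact Or.inl (SameCycle.refl _ _)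
  | succ j ih =>
    rw [pow_succ', mul_apply]
    by_cases hya : (π ^ j) a = a
    · exact Or.inr ⟨1, by simp [hya, mul_apply]⟩
    by_cases hyb : (π ^ j) a = b
    · exact Or.inl ⟨1, by simp [hyb, mul_apply]⟩
    have h : π ((π ^ j) a) = (π * swap a b) ((π ^ j) a) := by
      rw [mul_apply, swap_apply_of_ne_of_ne hya hyb]
    rw [h]
    exact ih.imp sameCycle_apply_right.2 sameCycle_apply_right.2

variable [Fintype α]

theorem support_mul_swap_of_apply_ne {π : Perm α} {a b : α} (ha : π a ≠ b) (hb : π b ≠ a) :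
    (π * swap a b).support = insert a (insert b π.support) := by
  ext x
  by_cases hxa : x = a
  · subst hxa; simp [mul_apply, hb]
  by_cases hxb : x = b
  · subst hxb; simp [mul_apply, ha]
  simp [mul_apply, swap_apply_of_ne_of_ne hxa hxb, hxa, hxb]

theorem card_cycleType_eq_card_cycleFactorsFinset (σ : Perm α) :
    σ.cycleType.card = #σ.cycleFactorsFinset := by
  rw [cycleType_def, Multiset.card_map]; rfl

theorem card_cycleType_le_two {σ : Perm α} {a b : α}
    (h : ∀ y ∈ σ.support, σ.SameCycle a y ∨ σ.SameCycle b y) : σ.cycleType.card ≤ 2 := by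
  have hsub : σ.cycleFactorsFinset ⊆ {σ.cycleOf a, σ.cycleOf b} := by
    intro c hc
    obtain ⟨y, hy⟩ := (mem_cycleFactorsFinset_iff.1 hc).1.nonempty_support
    rw [cycle_is_cycleOf hy hc]
    rcases h y (mem_cycleFactorsFinset_support_le hc hy) with h | h <;> simp [← h.cycleOf_eq]
  rw [card_cycleType_eq_card_cycleFactorsFinset]
  exact (card_le_card hsub).trans card_le_two

theorem even_card_support_add_card_cycleType_iff {σ : Perm α} :
    Even (#σ.support + σ.cycleType.card) ↔ sign σ = 1 := by
  rw [sign_of_cycleType, sum_cycleType, neg_one_pow_eq_one_iff_even (by decide)]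

theorem even_card_support_add_card_cycleType_mul_swap_iff (π : Perm α) {a b : α} (hab : a ≠ b) :
    Even (#(π * swap a b).support + (π * swap a b).cycleType.card) ↔
      ¬ Even (#π.support + π.cycleType.card) := by
  rw [even_card_support_add_card_cycleType_iff, even_card_support_add_card_cycleType_iff,
    sign_mul, sign_swap hab]
  rcases Int.units_eq_one_or (sign π) with h | h <;> simp [h]

theorem isCycle_mul_swap {π : Perm α} {a b : α} (hab : a ≠ b)
    (horbit : ∀ y ∈ π.support, π.SameCycle a y ∨ π.SameCycle b y)
    (hpar : Even (#(π * swap a b).support + #π.support + π.cycleType.card)) :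
    (π * swap a b).IsCycle := by
  have hσorbit : ∀ y ∈ (π * swap a b).support,
      (π * swap a b).SameCycle a y ∨ (π * swap a b).SameCycle b y := by
    intro y hy
    by_cases hyπ : y ∈ π.support
    · rcases horbit y hyπ with h | h <;> obtain ⟨j, rfl⟩ := h.exists_nat_pow_eq
      · exact sameCycle_mul_swap_pow π a b j
      · rw [swap_comm]; exact (sameCycle_mul_swap_pow π b a j).symm
    · have : y = a ∨ y = b := by
        by_contra! hne
        apply mem_support.1 hy
        rw [mul_apply, swap_apply_of_ne_of_ne hne.1 hne.2, notMem_support.1 hyπ]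
      rcases this with rfl | rfl
      · exact Or.inl (SameCycle.refl _ _)
      · exact Or.inr (SameCycle.refl _ _)
  have hle := card_cycleType_le_two hσorbit
  have hodd := even_card_support_add_card_cycleType_mul_swap_iff π hab
  rw [← card_cycleType_eq_one]
  simp only [Nat.even_iff] at hodd hpar
  omega

theorem IsCycle.mul_swap_of_notMem {c : Perm α} (hc : c.IsCycle) {a b : α}
    (ha : a ∈ c.support) (hb : b ∉ c.support) :
    (c * swap a b).IsCycle ∧ (c * swap a b).support = insert b c.support := by
  have hab : a ≠ b := ne_of_mem_of_not_mem ha hb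
  have hsupp : (c * swap a b).support = insert b c.support := by
    rw [support_mul_swap_of_apply_ne (fun h => hb (by rw [← h]; exact apply_mem_support.2 ha))
      (by rw [notMem_support.1 hb]; exact hab.symm), insert_comm, insert_eq_of_mem ha]
  refine ⟨isCycle_mul_swap hab (fun y hy => Or.inl (hc.sameCycle (mem_support.1 ha)
    (mem_support.1 hy))) ?_, hsupp⟩
  rw [hsupp, card_insert_of_notMem hb, hc.cycleType]
  simp

theorem IsCycle.swap_mul_of_notMem {c : Perm α} (hc : c.IsCycle) {a b : α}
    (ha : a ∈ c.support) (hb : b ∉ c.support) :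
    (swap a b * c).IsCycle ∧ (swap a b * c).support = insert b c.support := by
  have h := hc.inv.mul_swap_of_notMem (a := a) (b := b) (by rwa [support_inv])
    (by rwa [support_inv])
  rw [show swap a b * c = (c⁻¹ * swap a b)⁻¹ by simp]
  exact ⟨h.1.inv, by rw [support_inv, h.2, support_inv]⟩

theorem IsCycle.mul_mul_swap {c d : Perm α} (hc : c.IsCycle) (hd : d.IsCycle)
    (hcd : c.Disjoint d) {a b : α} (ha : a ∈ c.support) (hb : b ∈ d.support) :
    (c * d * swap a b).IsCycle ∧ (c * d * swap a b).support = c.support ∪ d.support := by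
  have hds := disjoint_iff_disjoint_support.1 hcd
  have hda : d a = a := notMem_support.1 (disjoint_left.1 hds ha)
  have hcb : c b = b := notMem_support.1 (disjoint_right.1 hds hb)
  have hsupp : (c * d * swap a b).support = c.support ∪ d.support := by
    rw [support_mul_swap_of_apply_ne, hcd.support_mul, insert_eq_of_mem (mem_union_right _ hb),
      insert_eq_of_mem (mem_union_left _ ha)]
    · rw [mul_apply, hda]
      exact fun h => disjoint_left.1 hds (apply_mem_support.2 ha) (h ▸ hb)
    · rw [mul_apply, notMem_support.1 (disjoint_right.1 hds (apply_mem_support.2 hb))]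
      exact fun h => disjoint_left.1 hds ha (h ▸ apply_mem_support.2 hb)
  refine ⟨isCycle_mul_swap (ne_of_mem_of_not_mem ha (disjoint_right.1 hds hb)) ?_ ?_, hsupp⟩
  · intro y hy
    rw [hcd.support_mul, mem_union] at hy
    rcases hy with hy | hy
    · exact Or.inl ((hc.sameCycle (mem_support.1 ha) (mem_support.1 hy)).mul_right_of_commute
        hcd.commute hda)
    · rw [hcd.commute.eq]
      exact Or.inr ((hd.sameCycle (mem_support.1 hb) (mem_support.1 hy)).mul_right_of_commute
        hcd.commute.symm hcb)
  · rw [hsupp, hcd.support_mul, hcd.cycleType_mul, hc.cycleType, hd.cycleType]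
    simp [Nat.even_iff]
    omega

theorem IsCycle.mul_swap_apply {c : Perm α} (hc : c.IsCycle) {x : α} (hx : x ∈ c.support)
    (h3 : 3 ≤ #c.support) :
    (c * swap x (c x)).IsCycle ∧ (c * swap x (c x)).support = c.support \ {c x} := by
  have hcx : c (c x) ≠ c x := mem_support.1 (apply_mem_support.2 hx)
  have hccx : c (c (c x)) ≠ c x := by
    refine fun h => ?_
    have h2 := hc.eq_swap_of_apply_apply_eq_self (mem_support.1 hx) (c.injective h)
    rw [h2, card_support_swap (mem_support.1 hx).symm] at h3
    omega
  rw [mul_swap_eq_swap_mul]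
  exact ⟨hc.swap_mul hcx hccx, support_swap_mul_eq _ _ hccx⟩

theorem IsCycle.support_subset_of_mapsTo {c : Perm α} (hc : c.IsCycle) {s : Finset α} {x : α}
    (hx : x ∈ c.support) (hxs : x ∈ s) (hs : ∀ y ∈ s, c y ∈ s) : c.support ⊆ s := by
  have hpow : ∀ j : ℕ, (c ^ j) x ∈ s := by
    intro j
    induction j with
    | zero => exact hxs
    | succ j ih => rw [pow_succ', mul_apply]; exact hs _ ih
  intro y hy
  obtain ⟨j, rfl⟩ := hc.exists_pow_eq (mem_support.1 hx) (mem_support.1 hy)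
  exact hpow j

theorem exists_mem_inter_of_mapsTo_mul {p q : Perm α} (hp : p.IsCycle) (hq : q.IsCycle)
    (hpq : (p.support ∩ q.support).Nonempty) {s : Finset α} (hs : s.Nonempty)
    (hsub : s ⊆ p.support ∪ q.support) (hmaps : ∀ x ∈ s, (p * q) x ∈ s) :
    ∃ x ∈ s, x ∈ p.support ∩ q.support := by
  by_contra! hout
  obtain ⟨z, hz⟩ := hpq
  rw [mem_inter] at hz
  by_cases hps : ∃ x ∈ s, x ∈ p.support
  · obtain ⟨x, hxs, hxp⟩ := hps
    refine hout z (hp.support_subset_of_mapsTo hxp hxs (fun y hy => ?_) hz.1) (mem_inter.2 hz)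
    by_cases hyp : y ∈ p.support
    · have hyq : q y = y := notMem_support.1 fun hyq => hout y hy (mem_inter.2 ⟨hyp, hyq⟩)
      simpa [mul_apply, hyq] using hmaps y hy
    · rwa [notMem_support.1 hyp]
  · push Not at hps
    obtain ⟨x, hxs⟩ := hs
    have hxq : x ∈ q.support := (mem_union.1 (hsub hxs)).resolve_left (hps x hxs)
    refine hout z (hq.support_subset_of_mapsTo hxq hxs (fun y hy => ?_) hz.2) (mem_inter.2 hz)
    have hpqy := hmaps y hy
    rw [mul_apply] at hpqy
    have hqy : q y ∉ p.support := fun h => hps _ hpqy (apply_mem_support.2 h)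
    rwa [notMem_support.1 hqy] at hpqy

theorem card_support_add_card_cycleType_mul_le {p q : Perm α} (hp : p.IsCycle)
    (hq : q.IsCycle) (hpq : (p.support ∩ q.support).Nonempty) :
    #(p * q).support + (p * q).cycleType.card ≤ #p.support + #q.support := by
  have hσU : (p * q).support ⊆ p.support ∪ q.support := support_mul_le p q
  have hcycles : Set.SurjOn (p * q).cycleOf ↑(p.support ∩ q.support ∩ (p * q).support)
      ↑(p * q).cycleFactorsFinset := by
    intro c hc
    have hc' := mem_cycleFactorsFinset_iff.1 hc
    obtain ⟨x, hxc, hxI⟩ := exists_mem_inter_of_mapsTo_mul hp hq hpq hc'.1.nonempty_support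
      ((mem_cycleFactorsFinset_support_le hc).trans hσU)
      (fun y hy => by rw [← hc'.2 y hy]; exact apply_mem_support.2 hy)
    exact ⟨x, mem_inter.2 ⟨hxI, mem_cycleFactorsFinset_support_le hc hxc⟩,
      (cycle_is_cycleOf hxc hc).symm⟩
  have hfixed : (p.support ∪ q.support) \ (p * q).support ⊆
      (p.support ∩ q.support) \ (p * q).support := by
    intro x hx
    rw [mem_sdiff] at hx ⊢
    obtain ⟨y, hy, hyI⟩ := exists_mem_inter_of_mapsTo_mul hp hq hpq (singleton_nonempty x)
      (singleton_subset_iff.2 hx.1) (by simpa using notMem_support.1 hx.2)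
    exact ⟨mem_singleton.1 hy ▸ hyI, hx.2⟩
  have h1 := card_le_card_of_surjOn _ hcycles
  have h2 := card_le_card hfixed
  have h3 := card_union_add_card_inter p.support q.support
  have h4 := card_sdiff_add_card_eq_card hσU
  have h5 := card_inter_add_card_sdiff (p.support ∩ q.support) (p * q).support
  rw [card_cycleType_eq_card_cycleFactorsFinset]
  omega

theorem cycleType_mul_eq_or_card_support_add_card_cycleType_mul_le {p q : Perm α}
    (hp : p.IsCycle) (hq : q.IsCycle) :
    (p * q).cycleType = {#p.support, #q.support} ∨
      #(p * q).support + (p * q).cycleType.card ≤ #p.support + #q.support := by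
  by_cases hd : p.Disjoint q
  · left
    rw [hd.cycleType_mul, hp.cycleType, hq.cycleType]
    rfl
  · right
    rw [disjoint_iff_disjoint_support, not_disjoint_iff_nonempty_inter] at hd
    exact card_support_add_card_cycleType_mul_le hp hq hd

def IsLinkedCyclePair (p q : Perm α) : Prop :=
  p.IsCycle ∧ q.IsCycle ∧ (p.support ∩ q.support).Nonempty

theorem IsLinkedCyclePair.conj_swap {p q : Perm α} (h : IsLinkedCyclePair p q) :
    IsLinkedCyclePair (p * q * p⁻¹) p := by
  obtain ⟨hp, hq, x, hx⟩ := h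
  rw [mem_inter] at hx
  exact ⟨hq.conj, hp, p x, mem_inter.2 ⟨by simpa [support_conj] using hx.2,
    apply_mem_support.2 hx.1⟩⟩

theorem IsLinkedCyclePair.exists_shift {p q : Perm α} (h : IsLinkedCyclePair p q)
    (hlt : #q.support < #p.support) :
    ∃ p' q', IsLinkedCyclePair p' q' ∧ p' * q' = p * q ∧
      #p'.support + 1 = #p.support ∧ #q'.support = #q.support + 1 := by
  obtain ⟨hp, hq, z, hz⟩ := h
  rw [mem_inter] at hz
  obtain ⟨a, haq, hpa⟩ : ∃ a ∈ q.support, p a ∉ q.support := by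
    by_contra! hmaps
    exact (card_le_card (hp.support_subset_of_mapsTo hz.1 hz.2 hmaps)).not_gt hlt
  have hap : a ∈ p.support := mem_support.2 fun h => hpa (h.symm ▸ haq)
  obtain ⟨hp', hp's⟩ := hp.mul_swap_apply hap (by have := hq.two_le_card_support; omega)
  obtain ⟨hq', hq's⟩ := hq.swap_mul_of_notMem haq hpa
  refine ⟨_, _, ⟨hp', hq', a, mem_inter.2 ⟨?_, ?_⟩⟩, ?_, ?_, ?_⟩
  · rw [hp's, mem_sdiff, mem_singleton]
    exact ⟨hap, (mem_support.1 hap).symm⟩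
  · rw [hq's]; exact mem_insert_of_mem haq
  · simp [mul_assoc]
  · rw [hp's, card_sdiff_of_subset (singleton_subset_iff.2 (apply_mem_support.2 hap)),
      card_singleton]
    omega
  · rw [hq's, card_insert_of_notMem hpa]

theorem IsLinkedCyclePair.exists_balanced_of_eq_add (d : ℕ) {p q : Perm α}
    (h : IsLinkedCyclePair p q) (hd : #p.support = #q.support + 2 * d) :
    ∃ p' q', IsLinkedCyclePair p' q' ∧ p' * q' = p * q ∧
      #p'.support = #q'.support ∧ #p'.support + #q'.support = #p.support + #q.support := by
  induction d generalizing p q with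
  | zero => exact ⟨p, q, h, rfl, by omega, rfl⟩
  | succ d ih =>
    obtain ⟨p₁, q₁, h₁, hmul₁, hp₁, hq₁⟩ := h.exists_shift (by omega)
    obtain ⟨p', q', h', hmul', hbal, hsum⟩ := ih h₁ (by omega)
    exact ⟨p', q', h', hmul'.trans hmul₁, hbal, by omega⟩

theorem IsLinkedCyclePair.exists_balanced {p q : Perm α} (h : IsLinkedCyclePair p q)
    (heven : Even (#p.support + #q.support)) :
    ∃ p' q', IsLinkedCyclePair p' q' ∧ p' * q' = p * q ∧
      #p'.support = #q'.support ∧ #p'.support + #q'.support = #p.support + #q.support := by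
  obtain ⟨t, ht⟩ := heven
  rcases le_total #q.support #p.support with hle | hle
  · exact h.exists_balanced_of_eq_add (#p.support - t) (by omega)
  · obtain ⟨p', q', h', hmul, hbal, hsum⟩ :=
      h.conj_swap.exists_balanced_of_eq_add (#q.support - t) (by rw [card_support_conj]; omega)
    exact ⟨p', q', h', by rw [hmul, inv_mul_cancel_right], hbal, by
      rw [hsum, card_support_conj, add_comm]⟩

theorem IsLinkedCyclePair.exists_grow {p q : Perm α} (h : IsLinkedCyclePair p q)
    (hp : #p.support < Fintype.card α) (hq : #q.support < Fintype.card α) :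
    ∃ p' q', IsLinkedCyclePair p' q' ∧ p' * q' = p * q ∧
      #p'.support = #p.support + 1 ∧ #q'.support = #q.support + 1 := by
  obtain ⟨hpc, hqc, z, hz⟩ := h
  rw [mem_inter] at hz
  obtain ⟨a, u, ha, hu, hq'c, hq's, hq'q⟩ : ∃ a u, a ∈ p.support ∧ u ∉ p.support ∧
      (swap a u * q).IsCycle ∧ #(swap a u * q).support = #q.support + 1 ∧
      q.support ⊆ (swap a u * q).support := by
    by_cases hqp : q.support ⊆ p.support
    · obtain ⟨u, -, hu⟩ := exists_mem_notMem_of_card_lt_card (s := p.support) (t := univ)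
        (by rwa [card_univ])
      obtain ⟨hc, hs⟩ := hqc.swap_mul_of_notMem hz.2 fun h => hu (hqp h)
      exact ⟨z, u, hz.1, hu, hc, by rw [hs, card_insert_of_notMem fun h => hu (hqp h)],
        hs ▸ subset_insert _ _⟩
    by_cases hpq : p.support ⊆ q.support
    · obtain ⟨u, -, hu⟩ := exists_mem_notMem_of_card_lt_card (s := q.support) (t := univ)
        (by rwa [card_univ])
      obtain ⟨hc, hs⟩ := hqc.swap_mul_of_notMem hz.2 hu
      exact ⟨z, u, hz.1, fun h => hu (hpq h), hc, by rw [hs, card_insert_of_notMem hu],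
        hs ▸ subset_insert _ _⟩
    obtain ⟨u, huq, hup⟩ := not_subset.1 hqp
    obtain ⟨a, hap, haq⟩ := not_subset.1 hpq
    obtain ⟨hc, hs⟩ := hqc.swap_mul_of_notMem huq haq
    rw [swap_comm] at hc hs
    exact ⟨a, u, hap, hup, hc, by rw [hs, card_insert_of_notMem haq], hs ▸ subset_insert _ _⟩
  obtain ⟨hp'c, hp's⟩ := hpc.mul_swap_of_notMem ha hu
  refine ⟨_, _, ⟨hp'c, hq'c, z, mem_inter.2 ⟨?_, hq'q hz.2⟩⟩, by simp [mul_assoc], ?_, hq's⟩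
  · rw [hp's]; exact mem_insert_of_mem hz.1
  · rw [hp's, card_insert_of_notMem hu]

theorem IsLinkedCyclePair.exists_card_support_eq {p q : Perm α} (h : IsLinkedCyclePair p q)
    (hpq : #p.support = #q.support) {l : ℕ} (hpl : #p.support ≤ l)
    (hl : l ≤ Fintype.card α) :
    ∃ p' q', p'.IsCycle ∧ #p'.support = l ∧ q'.IsCycle ∧ #q'.support = l ∧ p' * q' = p * q := by
  obtain ⟨k, rfl⟩ := Nat.exists_eq_add_of_le hpl
  induction k generalizing p q with
  | zero => exact ⟨p, q, h.1, rfl, h.2.1, hpq.symm, rfl⟩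
  | succ k ih =>
    obtain ⟨p₁, q₁, h₁, hmul₁, hp₁, hq₁⟩ := h.exists_grow (by omega) (by omega)
    obtain ⟨p', q', hp', hp'l, hq', hq'l, hmul'⟩ :=
      ih h₁ (by omega) (by omega) (by omega)
    exact ⟨p', q', hp', by omega, hq', by omega, hmul'.trans hmul₁⟩

-- Minimal by `card_support_add_card_cycleType_mul_le`.
def IsMinimalCyclePair (σ p q : Perm α) : Prop :=
  IsLinkedCyclePair p q ∧ p * q = σ ∧ p.support ∪ q.support = σ.support ∧
    #p.support + #q.support = #σ.support + σ.cycleType.card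

theorem IsCycle.isSwap_or_exists_isMinimalCyclePair {c : Perm α} (hc : c.IsCycle) :
    c.IsSwap ∨ ∃ p q, IsMinimalCyclePair c p q := by
  rcases hc.two_le_card_support.eq_or_lt with h2 | h3
  · exact Or.inl (card_support_eq_two.1 h2.symm)
  obtain ⟨a, ha⟩ := hc.nonempty_support
  have hca : a ≠ c a := (mem_support.1 ha).symm
  obtain ⟨hp, hps⟩ := hc.mul_swap_apply ha h3
  refine Or.inr ⟨_, _, ⟨hp, isCycle_swap hca, a, ?_⟩, by simp [mul_assoc], ?_, ?_⟩
  · simp [hps, support_swap hca, ha, hca]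
  · rw [hps, support_swap hca]
    ext y
    by_cases hy : y = c a <;> simp [hy, apply_mem_support.2 ha]
    rintro rfl
    exact mem_support.1 ha
  · rw [hps, support_swap hca, hc.cycleType, card_sdiff_of_subset
      (singleton_subset_iff.2 (apply_mem_support.2 ha)), card_singleton, card_pair hca]
    simp
    omega

theorem IsCycle.exists_isMinimalCyclePair_mul_swap {c : Perm α} (hc : c.IsCycle) {x y : α}
    (hxy : x ≠ y) (hd : c.Disjoint (swap x y)) :
    ∃ p q, IsMinimalCyclePair (c * swap x y) p q := by
  have hds := disjoint_iff_disjoint_support.1 hd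
  rw [support_swap hxy] at hds
  obtain ⟨a, ha⟩ := hc.nonempty_support
  have hxc : x ∉ c.support := disjoint_right.1 hds (mem_insert_self x _)
  have hax : a ∉ ({x, y} : Finset α) := disjoint_left.1 hds ha
  obtain ⟨hp, hps⟩ := hc.mul_swap_of_notMem ha hxc
  obtain ⟨hq, hqs⟩ := (isCycle_swap hxy).swap_mul_of_notMem
    (by rw [support_swap hxy]; exact mem_insert_self x _) (by rwa [support_swap hxy])
  rw [swap_comm x a] at hq hqs
  refine ⟨_, _, ⟨hp, hq, x, ?_⟩, by simp [mul_assoc], ?_, ?_⟩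
  · simp [hps, hqs, support_swap hxy]
  · rw [hps, hqs, hd.support_mul, support_swap hxy]
    ext z
    simp only [mem_union, mem_insert, mem_singleton]
    constructor
    · rintro ((rfl | h) | (rfl | rfl | rfl)) <;> simp_all
    · rintro (h | rfl | rfl) <;> simp_all
  · rw [hps, hqs, hd.support_mul, hd.cycleType_mul, hc.cycleType, (isCycle_swap hxy).cycleType,
      support_swap hxy, card_union_of_disjoint hds, card_insert_of_notMem hxc,
      card_insert_of_notMem hax, card_pair hxy]
    simp

theorem IsMinimalCyclePair.exists_cycle_mul {τ p q c : Perm α} (h : IsMinimalCyclePair τ p q)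
    (hc : c.IsCycle) (hd : c.Disjoint τ) : ∃ p' q', IsMinimalCyclePair (c * τ) p' q' := by
  obtain ⟨⟨hp, hq, a, ha⟩, rfl, hunion, hcard⟩ := h
  rw [mem_inter] at ha
  have hdτ := disjoint_iff_disjoint_support.1 hd
  have hds : _root_.Disjoint c.support (p.support ∪ q.support) := hunion ▸ hdτ
  obtain ⟨b, hb⟩ := hc.nonempty_support
  have hbq : b ∉ q.support := fun h => disjoint_left.1 hds hb (mem_union_right _ h)
  have hcp : c.Disjoint p :=
    disjoint_iff_disjoint_support.2 (hds.mono_right subset_union_left)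
  obtain ⟨hp', hp's⟩ := hc.mul_mul_swap hp hcp hb ha.1
  obtain ⟨hq', hq's⟩ := hq.swap_mul_of_notMem ha.2 hbq
  rw [swap_comm] at hq' hq's
  refine ⟨_, _, ⟨hp', hq', b, ?_⟩, by simp [mul_assoc], ?_, ?_⟩
  · simp [hp's, hq's, hb]
  · rw [hp's, hq's, hd.support_mul, ← hunion]
    ext z
    by_cases hz : z = b <;> simp [hz, hb]
  · rw [hp's, hq's, hd.support_mul, hd.cycleType_mul, hc.cycleType, Multiset.card_add,
      card_union_of_disjoint hdτ, card_union_of_disjoint (disjoint_iff_disjoint_support.1 hcp),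
      card_insert_of_notMem hbq]
    simp
    omega

theorem eq_one_or_isSwap_or_exists_isMinimalCyclePair (σ : Perm α) :
    σ = 1 ∨ σ.IsSwap ∨ ∃ p q, IsMinimalCyclePair σ p q := by
  induction σ using cycle_induction_on with
  | base_one => exact Or.inl rfl
  | base_cycles c hc => exact Or.inr hc.isSwap_or_exists_isMinimalCyclePair
  | induction_disjoint c τ hd hc _ hτ =>
    rcases hτ with rfl | ⟨x, y, hxy, rfl⟩ | ⟨p, q, h⟩
    · rw [mul_one]
      exact Or.inr hc.isSwap_or_exists_isMinimalCyclePair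
    · exact Or.inr (Or.inr (hc.exists_isMinimalCyclePair_mul_swap hxy hd))
    · exact Or.inr (Or.inr (h.exists_cycle_mul hc hd))

theorem exists_isCycle_card_support_eq {l : ℕ} (hl : 2 ≤ l) (hln : l ≤ Fintype.card α) :
    ∃ c : Perm α, c.IsCycle ∧ #c.support = l := by
  obtain ⟨c, hc⟩ := (exists_with_cycleType_iff α (m := {l})).2
    ⟨by simpa using hln, by simpa using hl⟩
  exact ⟨c, card_cycleType_eq_one.1 (by simp [hc]), by rw [← sum_cycleType, hc]; simp⟩

theorem exists_isCycle_mul_eq_of_sign_eq_one {σ : Perm α} (hσ : sign σ = 1) {l : ℕ}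
    (hl : 2 ≤ l) (hln : l ≤ Fintype.card α) (hσl : #σ.support + σ.cycleType.card ≤ 2 * l) :
    ∃ p q, p.IsCycle ∧ #p.support = l ∧ q.IsCycle ∧ #q.support = l ∧ σ = p * q := by
  rcases eq_one_or_isSwap_or_exists_isMinimalCyclePair σ with
    rfl | hswap | ⟨p, q, hlink, rfl, -, hcard⟩
  · obtain ⟨c, hc, hcl⟩ := exists_isCycle_card_support_eq hl hln
    exact ⟨c, c⁻¹, hc, hcl, hc.inv, by rwa [support_inv], by simp⟩
  · rw [hswap.sign_eq] at hσ
    exact absurd hσ (by decide)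
  · have heven : Even (#p.support + #q.support) :=
      hcard ▸ even_card_support_add_card_cycleType_iff.2 hσ
    obtain ⟨p₁, q₁, hlink₁, hmul₁, hbal, hsum⟩ := hlink.exists_balanced heven
    obtain ⟨p', q', hp', hp'l, hq', hq'l, hmul'⟩ :=
      hlink₁.exists_card_support_eq hbal (l := l) (by omega) hln
    exact ⟨p', q', hp', hp'l, hq', hq'l, (hmul'.trans hmul₁).symm⟩

theorem two_mul_card_cycleType_le (σ : Perm α) : 2 * σ.cycleType.card ≤ #σ.support := by
  rw [← sum_cycleType, mul_comm, ← smul_eq_mul]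
  exact Multiset.card_nsmul_le_sum fun _ => two_le_of_mem_cycleType

theorem card_support_add_card_cycleType_le_of_sign_eq_one {σ : Perm α} (hσ : sign σ = 1) :
    #σ.support + σ.cycleType.card ≤ 2 * (3 * Fintype.card α / 4) := by
  obtain ⟨t, ht⟩ := even_card_support_add_card_cycleType_iff.2 hσ
  have := two_mul_card_cycleType_le σ
  have := card_le_univ σ.support
  omega

theorem exists_isCycle_mul_eq_of_card_cycleType_eq_two {σ : Perm α}
    (h : σ.cycleType.card = 2) :
    ∃ c d, c.IsCycle ∧ d.IsCycle ∧ σ = c * d ∧ #σ.support = #c.support + #d.support := by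
  obtain ⟨d, hd⟩ : σ.cycleFactorsFinset.Nonempty := by
    rw [← card_pos, ← card_cycleType_eq_card_cycleFactorsFinset, h]; omega
  have hdc : d.IsCycle := (mem_cycleFactorsFinset_iff.1 hd).1
  have hcd := disjoint_mul_inv_of_mem_cycleFactorsFinset hd
  have hc : (σ * d⁻¹).IsCycle := by
    rw [← card_cycleType_eq_one, cycleType_mul_inv_mem_cycleFactorsFinset_eq_sub hd,
      Multiset.card_sub (cycleType_le_of_mem_cycleFactorsFinset hd), h, hdc.cycleType]
    rfl
  refine ⟨_, d, hc, hdc, by simp, ?_⟩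
  conv_lhs => rw [← inv_mul_cancel_right σ d]
  exact hcd.card_support_mul

theorem exists_sign_eq_one_two_mul_lt_card_support_add_card_cycleType {l : ℕ} (hl : 2 ≤ l)
    (hlt : l < 3 * Fintype.card α / 4)
    (h42 : ¬(Fintype.card α = 4 ∧ l = 2)) :
    ∃ σ : Perm α, sign σ = 1 ∧ σ.cycleType ≠ {l, l} ∧
      2 * l < #σ.support + σ.cycleType.card := by
  suffices ∃ s : Multiset ℕ, s.sum ≤ Fintype.card α ∧ (∀ a ∈ s, 2 ≤ a) ∧
      Even (s.sum + s.card) ∧ s ≠ {l, l} ∧ 2 * l < s.sum + s.card by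
    obtain ⟨s, hsum, h2, heven, hne, hlt⟩ := this
    obtain ⟨σ, rfl⟩ := (exists_with_cycleType_iff α).2 ⟨hsum, h2⟩
    rw [sum_cycleType] at heven hlt
    exact ⟨σ, even_card_support_add_card_cycleType_iff.1 heven, hne, hlt⟩
  set n := Fintype.card α
  have hne2 : ∀ s : Multiset ℕ, 2 ∈ s → 3 ≤ l → s ≠ {l, l} := by
    rintro s h2 hl3 rfl
    simp at h2
    omega
  rcases hl.eq_or_lt with rfl | hl3
  · exact ⟨{5}, by simp; omega, by simp, by decide, by decide, by simp⟩
  rcases (by omega : n % 4 ≤ 1 ∨ n % 4 = 2 ∨ n % 4 = 3) with h | h | h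
  · refine ⟨Multiset.replicate (2 * (n / 4)) 2, ?_, ?_, ?_, hne2 _ ?_ hl3, ?_⟩ <;>
      simp [Multiset.mem_replicate, Nat.even_iff] <;> omega
  · refine ⟨4 ::ₘ Multiset.replicate (2 * (n / 4) - 1) 2, ?_, ?_, ?_, hne2 _ ?_ hl3, ?_⟩ <;>
      simp [Multiset.mem_replicate, Nat.even_iff] <;> omega
  · refine ⟨3 ::ₘ Multiset.replicate (2 * (n / 4)) 2, ?_, ?_, ?_, hne2 _ ?_ hl3, ?_⟩ <;>
      simp [Multiset.mem_replicate, Nat.even_iff] <;> omega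

theorem exists_isCycle_mul_eq_of_sign_eq_one_of_card_eq_four {σ : Perm α}
    (hα : Fintype.card α = 4) (hσ : sign σ = 1) :
    ∃ p q, p.IsCycle ∧ #p.support = 2 ∧ q.IsCycle ∧ #q.support = 2 ∧ σ = p * q := by
  by_cases hsmall : #σ.support + σ.cycleType.card ≤ 2 * 2
  · exact exists_isCycle_mul_eq_of_sign_eq_one hσ le_rfl (by omega) hsmall
  have hm := card_le_univ σ.support
  have hr := two_mul_card_cycleType_le σ
  have heven := Nat.even_iff.1 (even_card_support_add_card_cycleType_iff.2 hσ)
  obtain ⟨c, d, hc, hd, rfl, hcd⟩ :=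
    exists_isCycle_mul_eq_of_card_cycleType_eq_two (σ := σ) (by omega)
  have := hc.two_le_card_support
  have := hd.two_le_card_support
  exact ⟨c, d, hc, by omega, hd, by omega, rfl⟩

end Equiv.Perm

open Equiv.Perm

theorem isProdOfCycles_two_iff {n l : ℕ} {σ : Perm (Fin n)} :
    IsProdOfCycles n 2 l σ ↔
      ∃ p q, p.IsCycle ∧ #p.support = l ∧ q.IsCycle ∧ #q.support = l ∧ σ = p * q := by
  constructor
  · rintro ⟨c, hc, rfl⟩
    exact ⟨c 0, c 1, (hc 0).1, (hc 0).2, (hc 1).1, (hc 1).2, by simp [List.ofFn_succ]⟩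
  · rintro ⟨p, q, hp, hpl, hq, hql, rfl⟩
    refine ⟨![p, q], fun i => ?_, by simp [List.ofFn_succ]⟩
    fin_cases i <;> simp [*]

theorem product_of_two_l_cycles_iff_general (n l : ℕ) (hl : 2 ≤ l) :
    (∀ σ ∈ alternatingGroup (Fin n), IsProdOfCycles n 2 l σ) ↔
      (3 * n / 4 ≤ l ∧ l ≤ n) ∨ (n = 4 ∧ l = 2) := by
  simp only [mem_alternatingGroup, isProdOfCycles_two_iff]
  constructor
  · intro H
    obtain ⟨p, -, -, hpl, -⟩ := H 1 (map_one _)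
    have hln : l ≤ n := hpl ▸ (card_le_univ p.support).trans_eq (Fintype.card_fin n)
    by_contra! hbad
    obtain ⟨σ, hσ, hne, hlt⟩ :=
      exists_sign_eq_one_two_mul_lt_card_support_add_card_cycleType (α := Fin n) hl
        (by rw [Fintype.card_fin]; omega) (by rw [Fintype.card_fin]; tauto)
    obtain ⟨p, q, hp, hpl, hq, hql, rfl⟩ := H σ hσ
    rcases cycleType_mul_eq_or_card_support_add_card_cycleType_mul_le hp hq with h | h
    · exact hne (by rw [h, hpl, hql])
    · omega
  · rintro (⟨h34, hln⟩ | ⟨rfl, rfl⟩) σ hσ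
    · refine exists_isCycle_mul_eq_of_sign_eq_one hσ hl (by rwa [Fintype.card_fin]) ?_
      have := card_support_add_card_cycleType_le_of_sign_eq_one hσ
      rw [Fintype.card_fin] at this
      omega
    · exact exists_isCycle_mul_eq_of_sign_eq_one_of_card_eq_four (Fintype.card_fin 4) hσ

theorem product_of_two_l_cycles_iff (n l : ℕ) (hn : 2 ≤ n) (hl : 2 ≤ l) :
    (∀ σ ∈ alternatingGroup (Fin n), IsProdOfCycles n 2 l σ) ↔
      (3 * n / 4 ≤ l ∧ l ≤ n) ∨ (n = 4 ∧ l = 2) :=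
  product_of_two_l_cycles_iff_general n l hl
end

section
/- For every integer l > 2, n(2,l) = ⌊4l/3⌋ + 1; that is, every element of A_{⌊4l/3⌋+1} is a product of two l-cycles of S_{⌊4l/3⌋+1}, and for every n > ⌊4l/3⌋+1 there exists an element of A_n that is not a product of two l-cycles of S_n. -/
/-!
Write `s` and `t` for the number of points moved by `σ` and the number of its nontrivial cycles,
so that `σ` is even iff `s + t` is even.

If `σ = f g` with `f`, `g` non-disjoint `l`-cycles, every cycle of `σ` passes through a point of
`g⁻¹ (supp f ∩ supp g)`, hence `s + t ≤ #(supp f ∪ supp g) + #(supp f ∩ supp g) = 2 l`; a disjoint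
product has cycle type `(l, l)`. For `n ≥ ⌊4l/3⌋ + 2` an even permutation with `s + t = 2 l + 2`
and no `l`-cycle exists, so it is not a product of two `l`-cycles.

Conversely, let `s + t = 2 h ≤ 2 l`. Cutting every cycle of `σ` at one point and gluing the pieces
writes `σ` as a product of two `h`-cycles sharing a point. Inserting a new point into each factor
multiplies them by a transposition and its inverse, which lengthens both cycles to `l`, as long
as `l ≤ n`. For `n = ⌊4l/3⌋ + 1` every even `σ` has `2 (s + t) ≤ 3 s ≤ 4 l + 3`, so `s + t ≤ 2 l`.
-/

open Equiv

open scoped Finset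

namespace List

variable {α : Type*} [DecidableEq α] {x y : α} {l : List α}

theorem formPerm_append_cons_eq_mul (l₁ l₂ : List α) (x : α) :
    formPerm (l₁ ++ x :: l₂) = formPerm (l₁ ++ [x]) * formPerm (x :: l₂) := by
  induction l₁ with
  | nil => simp
  | cons a l₁ ih =>
    cases l₁ with
    | nil => simp [formPerm_cons_cons]
    | cons b l₁ =>
      simp only [cons_append, formPerm_cons_cons] at ih ⊢
      rw [ih, mul_assoc]

theorem formPerm_cons_append_cons {l₁ l₂ : List α} (h : (x :: (l₁ ++ y :: l₂)).Nodup) :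
    formPerm (x :: (l₁ ++ y :: l₂)) =
      Equiv.swap x y * formPerm (x :: l₁) * formPerm (y :: l₂) := by
  induction l₁ generalizing x with
  | nil => simp [formPerm_cons_cons]
  | cons b l₁ ih =>
    have hx : x ∉ b :: l₁ ++ y :: l₂ := (nodup_cons.mp h).1
    have hb : b ∉ l₁ ++ y :: l₂ := (nodup_cons.mp (nodup_cons.mp h).2).1
    simp only [cons_append, mem_cons, mem_append, not_or] at hx hb
    rw [cons_append, formPerm_cons_cons, ih (nodup_cons.mp h).2, formPerm_cons_cons,
      ← mul_assoc, ← mul_assoc, mul_swap_eq_swap_mul, swap_apply_right,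
      swap_apply_of_ne_of_ne (Ne.symm hx.2.2.1) (Ne.symm hb.2.1), mul_assoc _ (Equiv.swap x b)]

theorem formPerm_append_concat {l₁ l₂ : List α} (h : (l₁ ++ x :: l₂ ++ [y]).Nodup) :
    formPerm (l₁ ++ x :: l₂ ++ [y]) =
      formPerm (l₁ ++ [x]) * formPerm (l₂ ++ [y]) * Equiv.swap x y := by
  have e : y :: (l₂.reverse ++ x :: l₁.reverse) = (l₁ ++ x :: l₂ ++ [y]).reverse := by simp
  have hrev := formPerm_cons_append_cons (e ▸ nodup_reverse.mpr h)
  rw [e, formPerm_reverse, ← reverse_concat', formPerm_reverse, ← reverse_concat',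
    formPerm_reverse] at hrev
  simpa [mul_assoc, Equiv.swap_comm] using congrArg (·⁻¹) hrev

theorem Nodup.card_support_formPerm [Fintype α] (hl : l.Nodup) (hl₂ : 2 ≤ l.length) :
    #l.formPerm.support = l.length := by
  rw [support_formPerm_of_nodup l hl (by rintro x rfl; simp at hl₂), toFinset_card_of_nodup hl]

theorem Nodup.exists_formPerm_eq_mul_swap (hl : l.Nodup) (hy : y ∈ l) (hx : x ∉ l) :
    ∃ l', l'.Nodup ∧ l'.length = l.length + 1 ∧ x ∈ l' ∧ l ⊆ l' ∧
      formPerm l' = formPerm l * Equiv.swap y x := by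
  obtain ⟨l₁, l₂, rfl⟩ := append_of_mem hy
  have hl' : (l₁ ++ y :: x :: l₂).Nodup := by
    have := (perm_middle (l₁ := l₁ ++ [y]) (l₂ := l₂) (a := x)).nodup_iff
    simp only [append_assoc, cons_append, nil_append] at this
    rw [this, nodup_cons]
    exact ⟨hx, hl⟩
  refine ⟨l₁ ++ y :: x :: l₂, hl', by simp; omega, by simp, fun z => by simp; tauto, ?_⟩
  have h₁ : l₁ ++ y :: x :: l₂ ~r l₂ ++ l₁ ++ [y, x] := by
    simpa using isRotated_append (l := l₁ ++ [y, x]) (l' := l₂)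
  have h₂ : l₁ ++ y :: l₂ ~r l₂ ++ l₁ ++ [y] := by
    simpa using isRotated_append (l := l₁ ++ [y]) (l' := l₂)
  rw [formPerm_eq_of_isRotated hl' h₁, formPerm_eq_of_isRotated hl h₂, formPerm_append_pair]

theorem Nodup.exists_formPerm_eq_swap_mul (hl : l.Nodup) (hx : x ∈ l) (hy : y ∉ l) :
    ∃ l', l'.Nodup ∧ l'.length = l.length + 1 ∧ y ∈ l' ∧ l ⊆ l' ∧
      formPerm l' = Equiv.swap y x * formPerm l := by
  obtain ⟨l₁, l₂, rfl⟩ := append_of_mem hx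
  have hl' : (l₁ ++ y :: x :: l₂).Nodup := by
    rw [nodup_middle, nodup_cons]
    exact ⟨hy, hl⟩
  refine ⟨l₁ ++ y :: x :: l₂, hl', by simp; omega, by simp, fun z => by simp; tauto, ?_⟩
  rw [formPerm_eq_of_isRotated hl' isRotated_append, formPerm_eq_of_isRotated hl isRotated_append]
  exact formPerm_cons_cons _ _ _

section Pumping

variable [Fintype α] {A B : List α}

theorem Nodup.exists_formPerm_mul_formPerm_eq_length_succ (hA : A.Nodup) (hB : B.Nodup)
    (hlen : A.length = B.length) (hcard : A.length < Fintype.card α) (hAB : ¬ A.Disjoint B) :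
    ∃ A' B' : List α, A'.Nodup ∧ B'.Nodup ∧ A'.length = A.length + 1 ∧
      B'.length = B.length + 1 ∧ ¬ A'.Disjoint B' ∧
      formPerm A' * formPerm B' = formPerm A * formPerm B := by
  -- If `B ⊆ A`, a fresh point goes next to a common point in both lists; otherwise some
  -- `x ∈ B \ A` goes into `A` after some `y ∈ A \ B`, and `y` into `B` before `x`.
  by_cases hBA : B ⊆ A
  · obtain ⟨z, -, hz⟩ : ∃ z ∈ Finset.univ, z ∉ A.toFinset :=
      Finset.exists_mem_notMem_of_card_lt_card
        (by rwa [toFinset_card_of_nodup hA, Finset.card_univ])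
    rw [mem_toFinset] at hz
    obtain ⟨w, hwA, hwB⟩ : ∃ w, w ∈ A ∧ w ∈ B := by simpa [List.Disjoint] using hAB
    obtain ⟨A', hA', hlenA', -, hAA', hformA⟩ := hA.exists_formPerm_eq_mul_swap hwA hz
    obtain ⟨B', hB', hlenB', -, hBB', hformB⟩ :=
      hB.exists_formPerm_eq_swap_mul hwB fun hzB => hz (hBA hzB)
    refine ⟨A', B', hA', hB', hlenA', hlenB', fun h => h (hAA' hwA) (hBB' hwB), ?_⟩
    rw [hformA, hformB, mul_assoc, ← mul_assoc (Equiv.swap w z), Equiv.swap_comm w z,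
      Equiv.swap_mul_self, one_mul]
  · obtain ⟨x, hxB, hxA⟩ : ∃ x ∈ B, x ∉ A := by simpa [List.subset_def] using hBA
    obtain ⟨y, hyA, hyB⟩ : ∃ y ∈ A, y ∉ B := by
      by_contra! hAB'
      exact hxA (((subperm_of_subset hA hAB').perm_of_length_le hlen.ge).mem_iff.mpr hxB)
    obtain ⟨A', hA', hlenA', hxA', -, hformA⟩ := hA.exists_formPerm_eq_mul_swap hyA hxA
    obtain ⟨B', hB', hlenB', -, hBB', hformB⟩ := hB.exists_formPerm_eq_swap_mul hxB hyB
    refine ⟨A', B', hA', hB', hlenA', hlenB', fun h => h hxA' (hBB' hxB), ?_⟩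
    rw [hformA, hformB, mul_assoc, ← mul_assoc (Equiv.swap y x), Equiv.swap_mul_self, one_mul]

theorem Nodup.exists_formPerm_mul_formPerm_eq_length (hA : A.Nodup) (hB : B.Nodup)
    (hlen : A.length = B.length) (hAB : ¬ A.Disjoint B) {k : ℕ} (hk : A.length ≤ k)
    (hkα : k ≤ Fintype.card α) :
    ∃ A' B' : List α, A'.Nodup ∧ B'.Nodup ∧ A'.length = k ∧ B'.length = k ∧
      ¬ A'.Disjoint B' ∧ formPerm A' * formPerm B' = formPerm A * formPerm B := by
  induction k, hk using Nat.le_induction with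
  | base => exact ⟨A, B, hA, hB, rfl, hlen.symm, hAB, rfl⟩
  | succ k hk ih =>
    obtain ⟨A', B', hA', hB', hA'k, hB'k, hA'B', hσ⟩ := ih (by omega)
    obtain ⟨A'', B'', hA'', hB'', hA''k, hB''k, hA''B'', hσ'⟩ :=
      hA'.exists_formPerm_mul_formPerm_eq_length_succ hB' (hA'k.trans hB'k.symm) (by omega) hA'B'
    exact ⟨A'', B'', hA'', hB'', by omega, by omega, hA''B'', hσ'.trans hσ⟩

end Pumping

end List

namespace Equiv.Perm

variable {α : Type*} [DecidableEq α] [Fintype α]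

theorem two_mul_card_cycleType_le_sum (σ : Perm α) :
    2 * Multiset.card σ.cycleType ≤ σ.cycleType.sum := by
  simpa [mul_comm] using Multiset.card_nsmul_le_sum fun _ => two_le_of_mem_cycleType (σ := σ)

theorem mem_alternatingGroup_iff_even {σ : Perm α} :
    σ ∈ alternatingGroup α ↔ Even (σ.cycleType.sum + Multiset.card σ.cycleType) := by
  rw [mem_alternatingGroup, sign_of_cycleType, neg_one_pow_eq_one_iff_even (by decide)]

/-- The cycles of `A ++ [m]` and `m :: B` share the point `m`; for a cycle `σ` this is cutting
its cycle `A ++ m :: B` at `m`. -/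
structure IsSplitting (σ : Perm α) (A B : List α) (m : α) : Prop where
  nodup_left : (A ++ [m]).Nodup
  nodup_right : (m :: B).Nodup
  mem_support : ∀ x ∈ A ++ m :: B, x ∈ σ.support
  formPerm_mul : (A ++ [m]).formPerm * (m :: B).formPerm = σ

theorem IsCycle.exists_isSplitting {σ : Perm α} (hσ : σ.IsCycle) {p : ℕ} (hp : p < #σ.support) :
    ∃ A B m, A.length = p ∧ A.length + B.length + 1 = #σ.support ∧ σ.IsSplitting A B m := by
  obtain ⟨x, hx⟩ := hσ.nonempty_support
  have hcyc : σ.cycleOf x = σ := hσ.cycleOf_eq (mem_support.mp hx)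
  set L := σ.toList x
  have hlen : L.length = #σ.support := by rw [length_toList, hcyc]
  have hL : L = L.take p ++ L[p] :: L.drop (p + 1) := by
    rw [← List.drop_eq_getElem_cons, List.take_append_drop]
  have hnodup : (L.take p ++ L[p] :: L.drop (p + 1)).Nodup := hL ▸ nodup_toList σ x
  refine ⟨L.take p, L.drop (p + 1), L[p], by simp; omega, by simp; omega,
    hnodup.sublist ((List.singleton_sublist.mpr List.mem_cons_self).append_left _),
    hnodup.sublist (List.sublist_append_right _ _), fun y hy => ?_, ?_⟩
  · rw [← hL] at hy
    exact ((mem_toList_iff.mp hy).1.mem_support_iff).mp hx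
  · rw [← List.formPerm_append_cons_eq_mul, ← hL, formPerm_toList, hcyc]

theorem Disjoint.isSplitting_mul {σ τ : Perm α} {A₁ B₁ A₂ B₂ : List α} {m₁ m₂ : α}
    (hστ : σ.Disjoint τ) (h₁ : σ.IsSplitting A₁ B₁ m₁) (h₂ : τ.IsSplitting A₂ B₂ m₂) :
    (σ * τ).IsSplitting (A₁ ++ m₁ :: A₂) (B₂ ++ m₁ :: B₁) m₂ := by
  have hστ' := disjoint_iff_disjoint_support.mp hστ
  have hne : ∀ x ∈ A₁ ++ m₁ :: B₁, ∀ y ∈ A₂ ++ m₂ :: B₂, x ≠ y := fun x hx y hy hxy =>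
    Finset.disjoint_left.mp hστ' (h₁.mem_support x hx) (hxy ▸ h₂.mem_support y hy)
  have hleft : (A₁ ++ m₁ :: A₂ ++ [m₂]).Nodup := by
    have : A₁ ++ m₁ :: A₂ ++ [m₂] = (A₁ ++ [m₁]) ++ (A₂ ++ [m₂]) := by simp
    rw [this, List.nodup_append]
    exact ⟨h₁.nodup_left, h₂.nodup_left, fun x hx y hy =>
      hne x (by simp at hx ⊢; tauto) y (by simp at hy ⊢; tauto)⟩
  have hright : (m₂ :: B₂ ++ m₁ :: B₁).Nodup := by
    rw [List.nodup_append]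
    exact ⟨h₂.nodup_right, h₁.nodup_right, fun y hy x hx =>
      (hne x (by simp at hx ⊢; tauto) y (by simp at hy ⊢; tauto)).symm⟩
  have hcomm : Commute (m₁ :: B₁).formPerm τ := by
    refine Disjoint.commute fun x => ?_
    by_cases hx : x ∈ m₁ :: B₁
    · exact .inr <| notMem_support.mp fun hτ =>
        Finset.disjoint_left.mp hστ' (h₁.mem_support x (by simp at hx ⊢; tauto)) hτ
    · exact .inl (List.formPerm_apply_of_notMem hx)
  refine ⟨hleft, hright, fun x hx => ?_, ?_⟩
  · rw [hστ.support_mul, Finset.mem_union]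
    have : x ∈ A₁ ++ m₁ :: B₁ ∨ x ∈ A₂ ++ m₂ :: B₂ := by simp at hx ⊢; tauto
    exact this.imp (h₁.mem_support x) (h₂.mem_support x)
  · rw [List.formPerm_append_concat hleft, List.formPerm_cons_append_cons hright,
      swap_comm m₂ m₁]
    calc _ = (A₁ ++ [m₁]).formPerm * τ * (m₁ :: B₁).formPerm := by
          rw [← h₂.formPerm_mul]; simp only [mul_assoc, swap_mul_self_mul]
      _ = σ * τ := by rw [mul_assoc, ← hcomm.eq, ← mul_assoc, h₁.formPerm_mul]

theorem exists_isSplitting {σ : Perm α} (hσ : σ ≠ 1) {p : ℕ}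
    (hp₁ : Multiset.card σ.cycleType ≤ p + 1) (hp₂ : p + 1 ≤ σ.cycleType.sum) :
    ∃ A B m, A.length = p ∧
      A.length + B.length + 2 = σ.cycleType.sum + Multiset.card σ.cycleType ∧
      σ.IsSplitting A B m := by
  induction σ using cycle_induction_on generalizing p with
  | base_one => exact absurd rfl hσ
  | base_cycles σ hc =>
    rw [hc.cycleType, Multiset.sum_singleton, Multiset.card_singleton] at *
    obtain ⟨A, B, m, hA, hAB, h⟩ := hc.exists_isSplitting (p := p) (by omega)
    exact ⟨A, B, m, hA, by omega, h⟩
  | induction_disjoint σ τ hστ hσc ihσ ihτ =>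
    rcases eq_or_ne τ 1 with rfl | hτ
    · rw [mul_one] at hp₁ hp₂ ⊢
      exact ihσ hσc.ne_one hp₁ hp₂
    have ht : 1 ≤ Multiset.card τ.cycleType := card_cycleType_pos.mpr hτ
    have hts := two_mul_card_cycleType_le_sum τ
    have hσ₂ := hσc.two_le_card_support
    rw [hστ.cycleType_mul, hσc.cycleType, Multiset.sum_add, Multiset.card_add,
      Multiset.sum_singleton, Multiset.card_singleton] at *
    set p₁ := min (#σ.support - 1) (p - Multiset.card τ.cycleType)
    obtain ⟨A₁, B₁, m₁, hA₁, hAB₁, h₁⟩ := hσc.exists_isSplitting (p := p₁) (by omega)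
    obtain ⟨A₂, B₂, m₂, hA₂, hAB₂, h₂⟩ := ihτ hτ (p := p - 1 - p₁) (by omega) (by omega)
    refine ⟨_, _, _, ?_, ?_, hστ.isSplitting_mul h₁ h₂⟩ <;> simp <;> omega

theorem exists_isCycle_mul_eq {σ : Perm α} {l : ℕ} (hl : 2 ≤ l) (hlα : l ≤ Fintype.card α)
    (hσl : σ.cycleType.sum + Multiset.card σ.cycleType ≤ 2 * l)
    (hσ : Even (σ.cycleType.sum + Multiset.card σ.cycleType)) :
    ∃ f g : Perm α, f.IsCycle ∧ #f.support = l ∧ g.IsCycle ∧ #g.support = l ∧ f * g = σ := by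
  obtain ⟨A, B, hA, hB, hlen, hAl, hAB, hσAB⟩ : ∃ A B : List α, A.Nodup ∧ B.Nodup ∧
      A.length = B.length ∧ A.length ≤ l ∧ ¬ A.Disjoint B ∧ A.formPerm * B.formPerm = σ := by
    rcases eq_or_ne σ 1 with rfl | hσ1
    · obtain ⟨x⟩ : Nonempty α := Fintype.card_pos_iff.mp (by omega)
      exact ⟨[x], [x], by simp, by simp, rfl, by simp; omega, by simp, by simp⟩
    obtain ⟨h, hh⟩ := hσ
    have := two_mul_card_cycleType_le_sum σ
    have := card_cycleType_pos.mpr hσ1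
    obtain ⟨A, B, m, hAlen, hABlen, hs⟩ :=
      exists_isSplitting hσ1 (p := h - 1) (by omega) (by omega)
    exact ⟨A ++ [m], m :: B, hs.nodup_left, hs.nodup_right, by simp; omega, by simp; omega,
      fun hd => hd (by simp) List.mem_cons_self, hs.formPerm_mul⟩
  obtain ⟨A', B', hA', hB', hA'l, hB'l, -, hσ'⟩ :=
    hA.exists_formPerm_mul_formPerm_eq_length hB hlen hAB hAl hlα
  exact ⟨_, _, List.isCycle_formPerm hA' (by omega),
    by rw [hA'.card_support_formPerm (by omega), hA'l], List.isCycle_formPerm hB' (by omega),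
    by rw [hB'.card_support_formPerm (by omega), hB'l], hσ'.trans hσAB⟩

theorem exists_isCycle_mul_eq_of_card_le {σ : Perm α} {l : ℕ} (hl : 2 ≤ l)
    (hlα : l ≤ Fintype.card α) (hαl : Fintype.card α ≤ 4 * l / 3 + 1)
    (hσ : σ ∈ alternatingGroup α) :
    ∃ f g : Perm α, f.IsCycle ∧ #f.support = l ∧ g.IsCycle ∧ #g.support = l ∧ f * g = σ := by
  have heven := mem_alternatingGroup_iff_even.mp hσ
  have hs := sum_cycleType_le σ
  have ht := two_mul_card_cycleType_le_sum σ
  refine exists_isCycle_mul_eq hl hlα ?_ heven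
  obtain ⟨h, hh⟩ := heven
  omega

theorem IsCycle.support_subset_of_mapsTo_s3 {g : Perm α} (hg : g.IsCycle) {S : Set α}
    (hS : Set.MapsTo g S S) {x : α} (hxS : x ∈ S) (hx : g x ≠ x) : ↑g.support ⊆ S := by
  intro y hy
  obtain ⟨i, rfl⟩ := (hg.sameCycle hx (mem_support.mp hy)).exists_nat_pow_eq
  rw [coe_pow]
  exact hS.iterate i hxS

theorem exists_sameCycle_mul_inv_apply {f g : Perm α} (hf : f.IsCycle) (hg : g.IsCycle) {z : α}
    (hz : z ∈ f.support ∩ g.support) {x : α} (hx : x ∈ (f * g).support) :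
    ∃ y ∈ f.support ∩ g.support, (f * g).SameCycle x (g⁻¹ y) := by
  -- Otherwise `f * g` agrees with `g` on the part of the orbit `O` of `x` inside `supp g`, or,
  -- if that part is empty, with `f` on `O`; either way `O` swallows the support of that cycle.
  by_contra! h
  set O : Set α := {u | (f * g).SameCycle x u}
  have hO : ∀ u ∈ O, u ∈ g.support → (f * g) u = g u := by
    intro u hu hug
    have hgu : g u ∉ f.support := fun hgu =>
      h (g u) (Finset.mem_inter.mpr ⟨hgu, apply_mem_support.mpr hug⟩) (by simpa [O] using hu)
    rw [mul_apply, notMem_support.mp hgu]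
  rw [Finset.mem_inter] at hz
  by_cases hOg : ∃ u ∈ O, u ∈ g.support
  · obtain ⟨u, huO, hug⟩ := hOg
    have hmaps : Set.MapsTo g (O ∩ g.support) (O ∩ g.support) := fun v ⟨hvO, hvg⟩ =>
      ⟨by rw [← hO v hvO hvg]; exact sameCycle_apply_right.mpr hvO, apply_mem_support.mpr hvg⟩
    have := hg.support_subset_of_mapsTo_s3 hmaps ⟨huO, hug⟩ (mem_support.mp hug)
      ((apply_mem_support (x := g⁻¹ z)).mp (by simpa using hz.2))
    exact h z (Finset.mem_inter.mpr hz) this.1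
  · push Not at hOg
    have hmaps : Set.MapsTo f O O := fun v hvO => by
      have : (f * g) v = f v := by rw [mul_apply, notMem_support.mp (hOg v hvO)]
      rw [← this]; exact sameCycle_apply_right.mpr hvO
    have hxf : f x ≠ x := by
      rwa [mem_support, mul_apply, notMem_support.mp (hOg x (.refl _ _))] at hx
    exact hOg z (hf.support_subset_of_mapsTo_s3 hmaps (SameCycle.refl _ _) hxf hz.1) hz.2

theorem card_cycleFactorsFinset_mul_le {f g : Perm α} (hf : f.IsCycle) (hg : g.IsCycle)
    (hfg : ¬ f.Disjoint g) : #(f * g).cycleFactorsFinset ≤ #(f.support ∩ g.support) := by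
  obtain ⟨z, hz⟩ := Finset.not_disjoint_iff_nonempty_inter.mp
    (mt disjoint_iff_disjoint_support.mpr hfg)
  refine Finset.card_le_card_of_surjOn (fun y => (f * g).cycleOf (g⁻¹ y)) fun c hc => ?_
  obtain ⟨x, hx⟩ := (mem_cycleFactorsFinset_iff.mp hc).1.nonempty_support
  obtain ⟨y, hy, hxy⟩ := exists_sameCycle_mul_inv_apply hf hg hz
    (mem_cycleFactorsFinset_support_le hc hx)
  exact ⟨y, hy, by rw [cycle_is_cycleOf hx hc, hxy.cycleOf_eq]⟩

theorem sum_cycleType_mul_add_card_le {f g : Perm α} (hf : f.IsCycle) (hg : g.IsCycle)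
    (hfg : ¬ f.Disjoint g) :
    (f * g).cycleType.sum + Multiset.card (f * g).cycleType ≤ #f.support + #g.support := by
  rw [sum_cycleType, cycleType_def, Multiset.card_map, ← Finset.card_def,
    ← Finset.card_union_add_card_inter]
  exact add_le_add (Finset.card_le_card (support_mul_le f g))
    (card_cycleFactorsFinset_mul_le hf hg hfg)

theorem mul_ne_of_sum_cycleType_add_card_eq {σ f g : Perm α} {l : ℕ}
    (hσ : σ.cycleType.sum + Multiset.card σ.cycleType = 2 * l + 2) (hσl : l ∉ σ.cycleType)
    (hf : f.IsCycle) (hfl : #f.support = l) (hg : g.IsCycle) (hgl : #g.support = l) :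
    f * g ≠ σ := by
  rintro rfl
  by_cases hfg : f.Disjoint g
  · simp [hfg.cycleType_mul, hf.cycleType, hfl] at hσl
  · have := sum_cycleType_mul_add_card_le hf hg hfg
    omega

/-- The witness has cycle type `2^a k`, with `k = 4, 3, 2` for `l % 3 = 0, 1, 2`. -/
theorem exists_sum_cycleType_add_card_eq {l : ℕ} (hl : 2 < l)
    (hα : 4 * l / 3 + 1 < Fintype.card α) :
    ∃ σ : Perm α, σ.cycleType.sum + Multiset.card σ.cycleType = 2 * l + 2 ∧ l ∉ σ.cycleType := by
  obtain ⟨a, k, hk, hkl, hsum, hcard⟩ : ∃ a k : ℕ, 2 ≤ k ∧ k ≠ l ∧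
      2 * a + k ≤ Fintype.card α ∧ 3 * a + k + 1 = 2 * l + 2 := by
    rcases (by omega : l % 3 = 0 ∨ l % 3 = 1 ∨ l % 3 = 2) with h | h | h
    · exact ⟨2 * (l / 3) - 1, 4, by omega, by omega, by omega, by omega⟩
    · exact ⟨2 * (l / 3), 3, by omega, by omega, by omega, by omega⟩
    · exact ⟨2 * (l / 3) + 1, 2, by omega, by omega, by omega, by omega⟩
  obtain ⟨σ, hσ⟩ := (exists_with_cycleType_iff α (m := k ::ₘ Multiset.replicate a 2)).mpr
    ⟨by simp; omega, fun b hb => by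
      rcases Multiset.mem_cons.mp hb with rfl | hb
      exacts [hk, (Multiset.eq_of_mem_replicate hb).ge]⟩
  refine ⟨σ, by simp [hσ]; omega, ?_⟩
  simp only [hσ, Multiset.mem_cons, Multiset.mem_replicate]
  omega

end Equiv.Perm

theorem isProdOfCycles_two_iff_s3 {n l : ℕ} {σ : Perm (Fin n)} :
    IsProdOfCycles n 2 l σ ↔
      ∃ f g : Perm (Fin n), f.IsCycle ∧ #f.support = l ∧ g.IsCycle ∧ #g.support = l ∧
        f * g = σ := by
  constructor
  · rintro ⟨c, hc, rfl⟩
    exact ⟨c 0, c 1, (hc 0).1, (hc 0).2, (hc 1).1, (hc 1).2, by simp [List.ofFn_succ]⟩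
  · rintro ⟨f, g, hf, hfl, hg, hgl, rfl⟩
    refine ⟨![f, g], fun i => ?_, by simp [List.ofFn_succ]⟩
    fin_cases i
    exacts [⟨hf, hfl⟩, ⟨hg, hgl⟩]

theorem n_2_l_eq_floor (l : ℕ) (hl : 2 < l) :
    (∀ σ ∈ alternatingGroup (Fin (4 * l / 3 + 1)),
      IsProdOfCycles (4 * l / 3 + 1) 2 l σ) ∧
    (∀ n : ℕ, 4 * l / 3 + 1 < n →
      ∃ σ ∈ alternatingGroup (Fin n), ¬ IsProdOfCycles n 2 l σ) := by
  refine ⟨fun σ hσ => ?_, fun n hn => ?_⟩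
  · rw [isProdOfCycles_two_iff_s3]
    exact Perm.exists_isCycle_mul_eq_of_card_le (by omega) (by simp; omega) (by simp) hσ
  · obtain ⟨σ, hσ, hσl⟩ := Perm.exists_sum_cycleType_add_card_eq (α := Fin n) hl (by simpa)
    refine ⟨σ, Perm.mem_alternatingGroup_iff_even.mpr ⟨l + 1, by omega⟩, ?_⟩
    rw [isProdOfCycles_two_iff_s3]
    rintro ⟨f, g, hf, hfl, hg, hgl, hfg⟩
    exact Perm.mul_ne_of_sum_cycleType_add_card_eq hσ hσl hf hfl hg hgl hfg
end

section
/- Let k, l be natural numbers with k ≥ 2 and l > 2, and suppose that l is odd or k is even. Set n₁ = ⌊2kl/3⌋. Then: (1) if n₁ ≡ 3 (mod 4), then n(k,l) ≤ n₁; (2) if n₁ ≡ 1 (mod 4), then n(k,l) ≤ n₁ + 1; (3) if n₁ ≡ 2 (mod 4), then n(k,l) ≤ n₁ + 1, and if moreover l > 3 and 2kl ≢ 2 (mod 3), then n(k,l) ≤ n₁; (4) if n₁ ≡ 0 (mod 4), then n(k,l) ≤ n₁ + 1. Here n(k,l) ≤ N means that for every n > N there exists an element of A_n that cannot be written as a product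 of k many l-cycles of S_n. -/
open Equiv

/-- `n(k,l) ≤ N`: for every `n > N` some element of `A_n` is not a product of
`k` many `l`-cycles. -/
def NklLe (k l N : ℕ) : Prop :=
  ∀ n : ℕ, N < n → ∃ σ ∈ alternatingGroup (Fin n), ¬ IsProdOfCycles n k l σ

/-!
If one of the `l`-cycles `c₁, …, c_k` is disjoint from all the others, it is a cycle of their
product `σ`. Otherwise write each `cᵢ` as `l - 1` transpositions. Multiplying by a transposition
changes the number of cycles of a permutation (fixed points included) by one, and lowers it
whenever the transposition joins two components of the graph drawn by the transpositions used so
far. Each component inside the union `E` of the supports meets at least two of the `cᵢ`, so there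
are at most `k / 2` of them, and this gives `|supp σ| + #cycles σ ≤ k l`.
Conversely, an even permutation of `Fin n` made of transpositions and at most two 3- or 4-cycles
(chosen to fix the parity and to avoid length `l`) reaches about `3 n / 2`, which exceeds `k l`
as soon as `n > 2 k l / 3`; the residue of `n` mod 4 decides the exact threshold.
-/

open Equiv.Perm Finset

namespace Setoid

variable {α : Type*}

def glue (s : Setoid α) (a b : α) : Setoid α where
  r x y := s x y ∨ (s x a ∨ s x b) ∧ (s y a ∨ s y b)
  iseqv := by
    refine ⟨fun x => Or.inl (s.refl x), ?_, ?_⟩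
    · rintro x y (h | ⟨hx, hy⟩)
      exacts [Or.inl (s.symm h), Or.inr ⟨hy, hx⟩]
    · rintro x y z (hxy | ⟨hx, hy⟩) (hyz | ⟨hy', hz⟩)
      · exact Or.inl (s.trans hxy hyz)
      · exact Or.inr ⟨hy'.imp (s.trans hxy) (s.trans hxy), hz⟩
      · exact Or.inr ⟨hx, hy.imp (s.trans (s.symm hyz)) (s.trans (s.symm hyz))⟩
      · exact Or.inr ⟨hx, hz⟩

variable {s t : Setoid α} {a b : α}

lemma le_glue : s ≤ s.glue a b := le_def.mpr Or.inl

lemma glue_rel : s.glue a b a b := Or.inr ⟨Or.inl (s.refl a), Or.inr (s.refl b)⟩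

lemma glue_rel_swap_apply [DecidableEq α] (x : α) : s.glue a b x (swap a b x) := by
  rcases eq_or_ne x a with rfl | hxa
  · rw [swap_apply_left]; exact glue_rel
  rcases eq_or_ne x b with rfl | hxb
  · rw [swap_apply_right]; exact (s.glue a x).iseqv.symm glue_rel
  · rw [swap_apply_of_ne_of_ne hxa hxb]

lemma glue_le (hst : s ≤ t) (hab : t a b) : s.glue a b ≤ t := by
  have ht : ∀ {x}, (s x a ∨ s x b) → t x a := fun hx =>
    hx.elim (fun h => le_def.mp hst h) fun h => t.trans (le_def.mp hst h) (t.symm hab)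
  exact le_def.mpr fun h =>
    h.elim (le_def.mp hst) fun ⟨hx, hy⟩ => t.trans (ht hx) (t.symm (ht hy))

lemma glue_mono (hst : s ≤ t) : s.glue a b ≤ t.glue a b :=
  glue_le (hst.trans le_glue) glue_rel

lemma glue_eq_self (hab : s a b) : s.glue a b = s :=
  le_antisymm (glue_le le_rfl hab) le_glue

lemma card_quotient_le_of_le [Finite α] (hst : s ≤ t) :
    Nat.card (Quotient t) ≤ Nat.card (Quotient s) :=
  Nat.card_le_card_of_surjective (map_of_le hst) (Quotient.ind fun x => ⟨Quotient.mk s x, rfl⟩)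

lemma card_quotient_le_glue_add_one [Finite α] :
    Nat.card (Quotient s) ≤ Nat.card (Quotient (s.glue a b)) + 1 := by
  classical
  let f (q : Quotient s) : Option (Quotient (s.glue a b)) :=
    if q = Quotient.mk s b then none else some (map_of_le le_glue q)
  have hf : Function.Injective f := by
    refine Quotient.ind fun x => Quotient.ind fun y hxy => ?_
    by_cases hx : Quotient.mk s x = Quotient.mk s b <;>
      by_cases hy : Quotient.mk s y = Quotient.mk s b
    · rw [hx, hy]
    all_goals simp only [f, hx, hy, if_true, if_false, reduceCtorEq, Option.some_inj] at hxy
    refine Quotient.sound ((Quotient.exact hxy).elim id fun ⟨hxa, hya⟩ => ?_)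
    have hxb : ¬ s x b := fun h => hx (Quotient.sound h)
    have hyb : ¬ s y b := fun h => hy (Quotient.sound h)
    exact s.trans (hxa.resolve_right hxb) (s.symm (hya.resolve_right hyb))
  simpa using Nat.card_le_card_of_injective f hf

lemma card_quotient_glue_lt [Finite α] (hab : ¬ s a b) :
    Nat.card (Quotient (s.glue a b)) < Nat.card (Quotient s) := by
  classical
  have := Fintype.ofFinite α
  simp only [Nat.card_eq_fintype_card]
  refine Fintype.card_lt_of_surjective_not_injective (map_of_le le_glue)
    (Quotient.ind fun x => ⟨Quotient.mk s x, rfl⟩) fun hinj => hab (Quotient.exact ?_)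
  exact hinj (Quotient.sound glue_rel : Quotient.mk (s.glue a b) a = Quotient.mk _ b)

def ofPairs (L : List (α × α)) : Setoid α :=
  L.foldr (fun p s => s.glue p.1 p.2) ⊥

lemma ofPairs_cons (p : α × α) (L : List (α × α)) :
    ofPairs (p :: L) = (ofPairs L).glue p.1 p.2 := rfl

lemma ofPairs_rel_of_mem {L : List (α × α)} {p : α × α} (hp : p ∈ L) :
    ofPairs L p.1 p.2 := by
  induction L with
  | nil => cases hp
  | cons q L ih =>
    rcases List.mem_cons.mp hp with rfl | hp
    · exact glue_rel
    · exact le_def.mp le_glue (ih hp)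

lemma ofPairs_le {L : List (α × α)} (h : ∀ p ∈ L, t p.1 p.2) : ofPairs L ≤ t := by
  induction L with
  | nil => exact le_def.mpr fun hxy => (bot_def ▸ hxy : _ = _) ▸ t.refl _
  | cons p L ih =>
    exact glue_le (ih fun q hq => h q (List.mem_cons_of_mem p hq)) (h p List.mem_cons_self)

lemma ofPairs_mono {L₁ L₂ : List (α × α)} (h : L₁ ⊆ L₂) :
    ofPairs L₁ ≤ ofPairs L₂ :=
  ofPairs_le fun _ hp => ofPairs_rel_of_mem (h hp)

end Setoid

namespace Equiv.Perm

variable {α : Type*}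

/-- Fixed points count as cycles. -/
noncomputable def cycleCount (σ : Perm α) : ℕ :=
  Nat.card (Quotient (SameCycle.setoid σ))

lemma cycleCount_one [Fintype α] : cycleCount (1 : Perm α) = Fintype.card α := by
  have h1 : SameCycle.setoid (1 : Perm α) = ⊥ := Setoid.ext fun _ _ => sameCycle_one
  rw [cycleCount, h1, Nat.card_congr Setoid.quotientBotEquiv, Nat.card_eq_fintype_card]

lemma sameCycle_setoid_le [Finite α] {σ : Perm α} {s : Setoid α} (h : ∀ x, s x (σ x)) :
    SameCycle.setoid σ ≤ s := by
  refine Setoid.le_def.mpr fun {x y} hxy => ?_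
  obtain ⟨i, rfl⟩ := (show σ.SameCycle x y from hxy).exists_nat_pow_eq
  clear hxy
  induction i with
  | zero => exact s.refl x
  | succ i ih => exact s.trans ih (by rw [pow_succ', mul_apply]; exact h _)

variable [DecidableEq α]

def swapsProd (L : List (α × α)) : Perm α :=
  (L.map (Function.uncurry swap)).prod

lemma swapsProd_cons (p : α × α) (L : List (α × α)) :
    swapsProd (p :: L) = swap p.1 p.2 * swapsProd L := rfl

lemma swapsProd_flatten (Ls : List (List (α × α))) :
    swapsProd Ls.flatten = (Ls.map swapsProd).prod := by
  simp only [swapsProd, List.map_flatten, List.prod_flatten, List.map_map]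
  rfl

variable [Fintype α]

lemma sameCycle_setoid_swap_mul_le (σ : Perm α) (a b : α) :
    SameCycle.setoid (swap a b * σ) ≤ (SameCycle.setoid σ).glue a b :=
  sameCycle_setoid_le fun x => ((SameCycle.setoid σ).glue a b).iseqv.trans
    (Setoid.le_def.mp Setoid.le_glue (sameCycle_apply_right.mpr (SameCycle.refl σ x)))
    (Setoid.glue_rel_swap_apply (σ x))

/-- From `b`, `swap a b * σ` follows the `σ`-orbit of `b`, which avoids `a`, until `σ` returns
to `b`; at that step it moves to `a` instead. -/
lemma sameCycle_swap_mul_of_not_sameCycle {σ : Perm α} {a b : α} (h : ¬ σ.SameCycle a b) :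
    (swap a b * σ).SameCycle b a := by
  set τ := swap a b * σ
  have hτ : ∀ i, (τ ^ i) b = (σ ^ i) b → (τ ^ (i + 1)) b = swap a b ((σ ^ (i + 1)) b) := by
    intro i hi
    rw [pow_succ', mul_apply, hi, pow_succ', mul_apply]
    rfl
  have hσa : ∀ i, (σ ^ i) b ≠ a := fun i hi => h ⟨-(i : ℤ), by simp [← hi]⟩
  have hpow : ∀ i, (τ ^ i) b = (σ ^ i) b ∨ τ.SameCycle b a := by
    intro i
    induction i with
    | zero => exact Or.inl rfl
    | succ i ih =>
      refine ih.elim (fun hi => ?_) Or.inr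
      rw [hτ i hi]
      by_cases hb : (σ ^ (i + 1)) b = b
      · rw [hb, swap_apply_right]
        exact Or.inr ⟨((i + 1 : ℕ) : ℤ),
          by rw [zpow_natCast, hτ i hi, hb, swap_apply_right]⟩
      · exact Or.inl (swap_apply_of_ne_of_ne (hσa _) hb)
  obtain ⟨m, hm⟩ : ∃ m, orderOf σ = m + 1 := Nat.exists_eq_add_one.mpr (orderOf_pos σ)
  refine (hpow m).elim (fun hm' => ⟨((m + 1 : ℕ) : ℤ), ?_⟩) id
  rw [zpow_natCast, hτ m hm', ← hm, pow_orderOf_eq_one, one_apply, swap_apply_right]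

lemma cycleCount_swap_mul_le (σ : Perm α) (a b : α) :
    cycleCount (swap a b * σ) ≤ cycleCount σ + 1 := by
  have hσ : swap a b * (swap a b * σ) = σ := by rw [← mul_assoc, swap_mul_self, one_mul]
  have := Setoid.card_quotient_le_of_le (hσ ▸ sameCycle_setoid_swap_mul_le (swap a b * σ) a b)
  have := Setoid.card_quotient_le_glue_add_one
    (s := SameCycle.setoid (swap a b * σ)) (a := a) (b := b)
  unfold cycleCount
  omega

lemma cycleCount_swap_mul_lt {σ : Perm α} {a b : α} (h : ¬ σ.SameCycle a b) :
    cycleCount (swap a b * σ) < cycleCount σ := by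
  set τ := swap a b * σ
  have hτ : τ.SameCycle a b := (sameCycle_swap_mul_of_not_sameCycle h).symm
  have hσ : SameCycle.setoid σ ≤ SameCycle.setoid τ := by
    have := sameCycle_setoid_swap_mul_le τ a b
    rwa [← mul_assoc, swap_mul_self, one_mul, Setoid.glue_eq_self hτ] at this
  calc cycleCount τ ≤ Nat.card (Quotient ((SameCycle.setoid σ).glue a b)) :=
        Setoid.card_quotient_le_of_le (Setoid.glue_le hσ hτ)
    _ < cycleCount σ := Setoid.card_quotient_glue_lt h

lemma card_compl_support_add_card_cycleType_le (σ : Perm α) :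
    Fintype.card α - #σ.support + Multiset.card σ.cycleType ≤ cycleCount σ := by
  classical
  let q : α → Quotient (SameCycle.setoid σ) := Quotient.mk _
  let cyc : Quotient (SameCycle.setoid σ) → Perm α :=
    Quotient.lift σ.cycleOf fun _ _ h => SameCycle.cycleOf_eq h
  have hfix : Set.InjOn q ↑σ.supportᶜ := fun x hx y _ hxy =>
    (Quotient.exact hxy : σ.SameCycle x y).eq_of_left (notMem_support.mp (mem_compl.mp hx))
  have hcyc : σ.cycleFactorsFinset ⊆ (σ.support.image q).image cyc := by
    intro d hd
    obtain ⟨x, hx⟩ := (mem_cycleFactorsFinset_iff.mp hd).1.nonempty_support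
    exact mem_image.mpr ⟨q x, mem_image_of_mem q (mem_cycleFactorsFinset_support_le hd hx),
      (cycle_is_cycleOf hx hd).symm⟩
  have hdisj : _root_.Disjoint (σ.supportᶜ.image q) (σ.support.image q) := by
    simp only [disjoint_left, mem_image, mem_compl, not_exists, not_and]
    rintro _ ⟨x, hx, rfl⟩ y hy hxy
    exact hx (((Quotient.exact hxy : σ.SameCycle y x).mem_support_iff).mp hy)
  calc Fintype.card α - #σ.support + Multiset.card σ.cycleType
      = #(σ.supportᶜ.image q) + #σ.cycleFactorsFinset := by
        rw [card_image_of_injOn hfix, card_compl, cycleType_def, Multiset.card_map]; rfl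
    _ ≤ #(σ.supportᶜ.image q) + #(σ.support.image q) :=
        Nat.add_le_add_left ((card_le_card hcyc).trans card_image_le) _
    _ = #(σ.supportᶜ.image q ∪ σ.support.image q) := (card_union_of_disjoint hdisj).symm
    _ ≤ cycleCount σ := by rw [cycleCount, Nat.card_eq_fintype_card]; exact card_le_univ _

lemma sameCycle_setoid_swapsProd_le (L : List (α × α)) :
    SameCycle.setoid (swapsProd L) ≤ Setoid.ofPairs L := by
  induction L with
  | nil => exact Setoid.le_def.mpr fun h => (sameCycle_one.mp h) ▸ Setoid.refl' _ _
  | cons p L ih => exact (sameCycle_setoid_swap_mul_le _ _ _).trans (Setoid.glue_mono ih)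

/-- A transposition splits a cycle or merges two; it merges exactly when its two points lie in
different components, which bounds the number of splits. -/
lemma cycleCount_swapsProd_add_card_le (L : List (α × α)) :
    cycleCount (swapsProd L) + Fintype.card α ≤
      2 * Nat.card (Quotient (Setoid.ofPairs L)) + L.length := by
  induction L with
  | nil =>
    rw [swapsProd, List.map_nil, List.prod_nil, cycleCount_one, Setoid.ofPairs,
      List.foldr_nil, Nat.card_congr Setoid.quotientBotEquiv, Nat.card_eq_fintype_card]
    omega
  | cons p L ih =>
    rw [swapsProd_cons, Setoid.ofPairs_cons, List.length_cons]
    by_cases hp : Setoid.ofPairs L p.1 p.2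
    · rw [Setoid.glue_eq_self hp]
      have := cycleCount_swap_mul_le (swapsProd L) p.1 p.2
      omega
    · have hσ : ¬ (swapsProd L).SameCycle p.1 p.2 :=
        fun h => hp (Setoid.le_def.mp (sameCycle_setoid_swapsProd_le L) h)
      have := cycleCount_swap_mul_lt hσ
      have := Setoid.card_quotient_le_glue_add_one (s := Setoid.ofPairs L) (a := p.1) (b := p.2)
      omega

lemma IsCycle.exists_swapsProd_eq {c : Perm α} (hc : c.IsCycle) :
    ∃ L : List (α × α), swapsProd L = c ∧ L.length + 1 = #c.support := by
  obtain ⟨x, hx⟩ := hc.nonempty_support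
  refine ⟨(c.toList x).zip (c.toList x).tail, ?_, ?_⟩
  · rw [swapsProd, List.map_uncurry_zip_eq_zipWith, ← List.formPerm, formPerm_toList,
      hc.cycleOf_eq (mem_support.mp hx)]
  · rw [List.length_zip, List.length_tail, length_toList, hc.cycleOf_eq (mem_support.mp hx)]
    have := hc.two_le_card_support
    omega

lemma two_mul_card_quotient_le {k : ℕ} {c : Fin k → Perm α} (hc : ∀ i, (c i).IsCycle)
    (hov : ∀ i, ∃ j ≠ i, ¬ (c j).Disjoint (c i)) {s : Setoid α}
    (hs : ∀ i, SameCycle.setoid (c i) ≤ s) :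
    2 * Nat.card (Quotient s) ≤ k + 2 * #(univ.biUnion fun i => (c i).support)ᶜ := by
  classical
  choose x hx using fun i => (hc i).nonempty_support
  set E := univ.biUnion fun i => (c i).support
  let q : α → Quotient s := Quotient.mk s
  have hq : ∀ i, ∀ y ∈ (c i).support, q y = q (x i) := fun i y hy =>
    Quotient.sound (Setoid.le_def.mp (hs i)
      ((hc i).sameCycle (mem_support.mp hy) (mem_support.mp (hx i))))
  have hpairs : 2 * #(univ.image (q ∘ x)) ≤ k := by
    refine (mul_card_image_le_card univ 2 fun v hv => ?_).trans
      (card_univ.trans (Fintype.card_fin k)).le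
    obtain ⟨i, -, rfl⟩ := mem_image.mp hv
    obtain ⟨j, hji, hij⟩ := hov i
    simp only [Perm.Disjoint, not_forall, not_or] at hij
    obtain ⟨w, hwj, hwi⟩ := hij
    have hj : q (x j) = q (x i) := by
      rw [← hq j w (mem_support.mpr hwj), hq i w (mem_support.mpr hwi)]
    refine one_lt_card.mpr ⟨i, by simp, j, by simp [hj], hji.symm⟩
  have hcover : (univ : Finset (Quotient s)) ⊆ univ.image (q ∘ x) ∪ Eᶜ.image q := by
    refine Quotient.ind fun y _ => ?_
    by_cases hy : y ∈ E
    · obtain ⟨i, -, hyi⟩ := mem_biUnion.mp hy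
      exact mem_union_left _ (mem_image.mpr ⟨i, mem_univ i, (hq i y hyi).symm⟩)
    · exact mem_union_right _ (mem_image_of_mem q (mem_compl.mpr hy))
  calc 2 * Nat.card (Quotient s) = 2 * #(univ : Finset (Quotient s)) := by
        rw [card_univ, Nat.card_eq_fintype_card]
    _ ≤ 2 * (#(univ.image (q ∘ x)) + #Eᶜ) :=
        Nat.mul_le_mul_left 2 ((card_le_card hcover).trans
          ((card_union_le _ _).trans (Nat.add_le_add_left card_image_le _)))
    _ ≤ k + 2 * #Eᶜ := by omega

lemma mem_cycleType_prod_ofFn {k : ℕ} (c : Fin k → Perm α) {i : Fin k} (hc : (c i).IsCycle)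
    (hdisj : ∀ j ≠ i, (c j).Disjoint (c i)) :
    #(c i).support ∈ (List.ofFn c).prod.cycleType := by
  obtain ⟨s, t, hst⟩ := List.append_of_mem (List.mem_finRange i)
  have hi : i ∉ s ++ t := by
    have hnd := hst ▸ List.nodup_finRange k
    exact (List.nodup_cons.mp (List.nodup_middle.mp hnd)).1
  have hA : ∀ g ∈ s.map c, (c i).Disjoint g := by
    simp only [List.mem_map]
    rintro _ ⟨j, hj, rfl⟩
    exact (hdisj j fun h => hi (h ▸ List.mem_append_left t hj)).symm
  have hB : ∀ g ∈ t.map c, (c i).Disjoint g := by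
    simp only [List.mem_map]
    rintro _ ⟨j, hj, rfl⟩
    exact (hdisj j fun h => hi (h ▸ List.mem_append_right s hj)).symm
  have hprod : (List.ofFn c).prod = c i * ((s.map c).prod * (t.map c).prod) := by
    rw [List.ofFn_eq_map, hst, List.map_append, List.map_cons, List.prod_append, List.prod_cons,
      ((disjoint_prod_right _ hA).symm.commute).left_comm]
  rw [hprod, Disjoint.cycleType_mul
    ((disjoint_prod_right _ hA).mul_right (disjoint_prod_right _ hB)), hc.cycleType]
  exact Multiset.mem_add.mpr (Or.inl (Multiset.mem_singleton_self _))

lemma support_prod_subset {l : List (Perm α)} {E : Finset α} (h : ∀ g ∈ l, g.support ⊆ E) :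
    l.prod.support ⊆ E := by
  induction l with
  | nil => simp
  | cons g l ih =>
    rw [List.prod_cons]
    exact (support_mul_le g _).trans (union_subset (h g List.mem_cons_self)
      (ih fun g hg => h g (List.mem_cons_of_mem _ hg)))

theorem cycleType_sum_add_card_le_of_not_disjoint {k : ℕ} (c : Fin k → Perm α)
    (hc : ∀ i, (c i).IsCycle) (hov : ∀ i, ∃ j ≠ i, ¬ (c j).Disjoint (c i)) :
    (List.ofFn c).prod.cycleType.sum + Multiset.card (List.ofFn c).prod.cycleType ≤
      ∑ i, #(c i).support := by
  choose P hP hlen using fun i => (hc i).exists_swapsProd_eq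
  set L := (List.ofFn P).flatten
  set σ := (List.ofFn c).prod
  set E := univ.biUnion fun i => (c i).support
  have hσ : swapsProd L = σ := by
    rw [swapsProd_flatten, List.map_ofFn]
    exact congrArg (fun f => (List.ofFn f).prod) (funext hP)
  have hL : L.length + k = ∑ i, #(c i).support := by
    simp [L, List.length_flatten, List.map_ofFn, List.sum_ofFn, ← hlen, sum_add_distrib]
  have hs : ∀ i, SameCycle.setoid (c i) ≤ Setoid.ofPairs L := fun i =>
    hP i ▸ (sameCycle_setoid_swapsProd_le (P i)).trans (Setoid.ofPairs_mono fun p hp =>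
      List.mem_flatten.mpr ⟨P i, List.mem_ofFn.mpr ⟨i, rfl⟩, hp⟩)
  have hwalk := hσ ▸ cycleCount_swapsProd_add_card_le L
  have hcomp : 2 * Nat.card (Quotient (Setoid.ofPairs L)) ≤ k + 2 * #Eᶜ :=
    two_mul_card_quotient_le hc hov hs
  have hlow := card_compl_support_add_card_cycleType_le σ
  have hsupp : #σ.support ≤ #E := card_le_card (support_prod_subset fun g hg => by
    obtain ⟨i, rfl⟩ := List.mem_ofFn.mp hg
    exact subset_biUnion_of_mem (fun i => (c i).support) (mem_univ i))
  have hE : #Eᶜ + #E = Fintype.card α := by rw [card_compl, Nat.sub_add_cancel (card_le_univ E)]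
  rw [sum_cycleType]
  omega

end Equiv.Perm

lemma not_isProdOfCycles_of_cycleType {n k l : ℕ} {σ : Perm (Fin n)} (hl : l ∉ σ.cycleType)
    (hbig : k * l < σ.cycleType.sum + Multiset.card σ.cycleType) :
    ¬ IsProdOfCycles n k l σ := by
  rintro ⟨c, hc, rfl⟩
  by_cases hov : ∀ i, ∃ j ≠ i, ¬ (c j).Disjoint (c i)
  · have := cycleType_sum_add_card_le_of_not_disjoint c (fun i => (hc i).1) hov
    simp only [fun i => (hc i).2, sum_const, card_univ, Fintype.card_fin, smul_eq_mul] at this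
    omega
  · push Not at hov
    obtain ⟨i, hi⟩ := hov
    exact hl ((hc i).2 ▸ mem_cycleType_prod_ofFn c (hc i).1 hi)

lemma exists_mem_alternatingGroup_cycleType_eq {α : Type*} [Fintype α] [DecidableEq α]
    {M : Multiset ℕ} (hsum : M.sum ≤ Fintype.card α) (h2 : ∀ a ∈ M, 2 ≤ a)
    (heven : Even (M.sum + Multiset.card M)) :
    ∃ σ ∈ alternatingGroup α, σ.cycleType = M := by
  obtain ⟨σ, hσ⟩ := (exists_with_cycleType_iff α).mpr ⟨hsum, h2⟩
  refine ⟨σ, ?_, hσ⟩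
  rw [mem_alternatingGroup, sign_of_cycleType, hσ]
  exact heven.neg_one_pow

/-- Twice the shortfall from `3 n / 2` of `|supp σ| + #cycles σ` for the even permutations
`σ ∈ S_n` built in `exists_mem_alternatingGroup_not_mem_cycleType` from transpositions and at
most two 3- or 4-cycles, which fix the parity and avoid `l`-cycles. -/
def cycleDefect (l n : ℕ) : ℕ :=
  if n % 4 = 0 then 0 else if n % 4 = 1 then 3 else if n % 4 = 2 then 2
  else if l = 3 then 5 else 1

lemma exists_mem_alternatingGroup_not_mem_cycleType {n l : ℕ} (hn : 4 < n) (hl : 2 < l) :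
    ∃ σ ∈ alternatingGroup (Fin n), l ∉ σ.cycleType ∧
      3 * n ≤ 2 * (σ.cycleType.sum + Multiset.card σ.cycleType) + cycleDefect l n := by
  obtain ⟨a, b, c, hsum, heven, h3, h4, hbound⟩ : ∃ a b c : ℕ,
      2 * a + 3 * b + 4 * c ≤ n ∧ (a + c) % 2 = 0 ∧
      (b = 0 ∨ l ≠ 3) ∧ (c = 0 ∨ l ≠ 4) ∧
      3 * n ≤ 2 * (3 * a + 4 * b + 5 * c) + cycleDefect l n := by
    unfold cycleDefect
    split_ifs
    · exact ⟨n / 2, 0, 0, by omega⟩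
    · exact ⟨n / 2, 0, 0, by omega⟩
    · by_cases hl4 : l = 4
      exacts [⟨n / 2 - 3, 2, 0, by omega⟩, ⟨n / 2 - 2, 0, 1, by omega⟩]
    · exact ⟨n / 2 - 2, 0, 1, by omega⟩
    · exact ⟨n / 2 - 1, 1, 0, by omega⟩
  obtain ⟨σ, hσ, hM⟩ := exists_mem_alternatingGroup_cycleType_eq (α := Fin n)
    (M := .replicate a 2 + .replicate b 3 + .replicate c 4)
    (by simp only [Multiset.sum_add, Multiset.sum_replicate, smul_eq_mul, Fintype.card_fin]; omega)
    (by simp only [Multiset.mem_add, Multiset.mem_replicate]; omega)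
    (by simp only [Multiset.sum_add, Multiset.sum_replicate, smul_eq_mul, Multiset.card_add,
          Multiset.card_replicate, Nat.even_iff]; omega)
  refine ⟨σ, hσ, ?_, ?_⟩ <;> rw [hM]
  · simp only [Multiset.mem_add, Multiset.mem_replicate, not_or, not_and]; omega
  · simp only [Multiset.sum_add, Multiset.sum_replicate, smul_eq_mul, Multiset.card_add,
      Multiset.card_replicate]; omega

lemma nklLe_of_forall_lt {k l N : ℕ} (hl : 2 < l) (hN : 4 ≤ N)
    (h : ∀ n, N < n → 2 * (k * l) + cycleDefect l n < 3 * n) : NklLe k l N := by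
  intro n hn
  obtain ⟨σ, hσ, hσl, hbound⟩ :=
    exists_mem_alternatingGroup_not_mem_cycleType (n := n) (by omega) hl
  exact ⟨σ, hσ, not_isProdOfCycles_of_cycleType hσl (by have := h n hn; omega)⟩

theorem general_upper_bound_n_k_l_general (k l : ℕ) (hk : 2 ≤ k) (hl : 2 < l) :
    (2 * k * l / 3 % 4 = 3 → NklLe k l (2 * k * l / 3)) ∧
    (2 * k * l / 3 % 4 = 1 → NklLe k l (2 * k * l / 3 + 1)) ∧
    (2 * k * l / 3 % 4 = 2 → NklLe k l (2 * k * l / 3 + 1) ∧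
      (3 < l → 2 * k * l % 3 ≠ 2 → NklLe k l (2 * k * l / 3))) ∧
    (2 * k * l / 3 % 4 = 0 → NklLe k l (2 * k * l / 3 + 1)) := by
  have hkl : 6 ≤ k * l := Nat.mul_le_mul hk hl
  have hkl3 : l = 3 → k * l = 3 * k := by rintro rfl; ring
  rw [mul_assoc]
  refine ⟨fun hmod => ?_, fun hmod => ?_, fun hmod => ⟨?_, fun hlt3 hmod3 => ?_⟩,
    fun hmod => ?_⟩ <;>
    refine nklLe_of_forall_lt hl (by omega) fun n hn => ?_ <;>
    unfold cycleDefect <;> split_ifs <;> omega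

theorem general_upper_bound_n_k_l (k l : ℕ) (hk : 2 ≤ k) (hl : 2 < l)
    (h : Odd l ∨ Even k) :
    (2 * k * l / 3 % 4 = 3 → NklLe k l (2 * k * l / 3)) ∧
    (2 * k * l / 3 % 4 = 1 → NklLe k l (2 * k * l / 3 + 1)) ∧
    (2 * k * l / 3 % 4 = 2 → NklLe k l (2 * k * l / 3 + 1) ∧
      (3 < l → 2 * k * l % 3 ≠ 2 → NklLe k l (2 * k * l / 3))) ∧
    (2 * k * l / 3 % 4 = 0 → NklLe k l (2 * k * l / 3 + 1)) :=
  general_upper_bound_n_k_l_general k l hk hl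
end

section
/- Let l ≥ 9 be a natural number with 3 dividing l, let k ≥ 6 be an even number, and set n = (2/3)kl + 1. Let σ ∈ A_n be such that m_σ = n and 3·n_σ > n + 2. Then there exist ε ∈ {0,1} and even permutations φ, τ ∈ S_n with disjoint supports such that σ = φτ, |supp(φ)| = (2/3)(k−2)l + ε, and |supp(τ)| = (4l/3) + 1 − ε. -/
open Equiv

/-!
Write `c`, `c₂`, `c₃` for the numbers of cycles, of 2-cycles and of 3-cycles of `σ`, and
`l = 3m`. Every cycle has length at least 2 and the lengths add up to `n`, so
`4c ≤ n + 2c₂ + c₃`; with `3c ≥ n + 3` and `n ≥ 12m + 1` this gives `c₂ ≥ 3` and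
`2c₂ + c₃ ≥ 4m + 5`. Hence some even number `a` of 2-cycles and some number `d` of 3-cycles of
`σ` move exactly `2a + 3d = 4m + 1 - ε` points. Their product `τ` is even, and so is the
product `φ` of the remaining cycles, because `σ` is.
-/

open Finset

theorem Multiset.exists_le_map_eq_of_le_map {α β : Type*} {f : α → β} {s : Multiset β}
    {t : Multiset α} (h : s ≤ t.map f) : ∃ u ≤ t, u.map f = s := by
  induction s using Quotient.inductionOn with | h l₁ =>
  induction t using Quotient.inductionOn with | h l₂ =>
  obtain ⟨w, hw, hsub⟩ := (Multiset.coe_le.mp h : List.Subperm l₁ (l₂.map f))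
  obtain ⟨x, hx, rfl⟩ := List.sublist_map_iff.mp hsub
  exact ⟨x, hx.subperm, Quotient.sound hw⟩

theorem Multiset.four_mul_card_le_sum_add_count (s : Multiset ℕ) (hs : ∀ x ∈ s, 2 ≤ x) :
    4 * card s ≤ s.sum + 2 * s.count 2 + s.count 3 := by
  induction s using Multiset.induction with
  | empty => simp
  | cons x s ih =>
    have := hs x (mem_cons_self x s)
    simp only [card_cons, sum_cons, count_cons]
    have := ih fun y hy => hs y (mem_cons_of_mem hy)
    split_ifs <;> omega

theorem Multiset.count_add_count_le_card {α : Type*} [DecidableEq α] {a b : α} (hab : a ≠ b)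
    (s : Multiset α) : s.count a + s.count b ≤ card s := by
  induction s using Multiset.induction with
  | empty => simp
  | cons x s ih =>
    simp only [card_cons, count_cons]
    split_ifs <;> grind

theorem Multiset.replicate_add_replicate_le {α : Type*} [DecidableEq α] {a b : α} (hab : a ≠ b)
    {i j : ℕ} {s : Multiset α} (hi : i ≤ s.count a) (hj : j ≤ s.count b) :
    replicate i a + replicate j b ≤ s := by
  rw [Multiset.le_iff_count]
  intro x
  simp only [count_add, count_replicate]
  split_ifs <;> grind

theorem Nat.exists_even_two_mul_add_three_mul_eq (m c₂ c₃ : ℕ) (hc₂ : 2 ≤ c₂)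
    (h : 4 * m + 4 ≤ 2 * c₂ + c₃) :
    ∃ ε a d : ℕ, ε ≤ 1 ∧ Even a ∧ a ≤ c₂ ∧ d ≤ c₃ ∧ 2 * a + 3 * d = 4 * m + 1 - ε := by
  -- `b` pairs of 2-cycles are available; if they do not reach `4m`, giving up one pair and
  -- choosing `ε` makes the remainder divisible by 3.
  set b := min m (c₂ / 2)
  by_cases hb : b = m
  · exact ⟨1, 2 * m, 0, le_rfl, even_two_mul m, by omega, by omega, by omega⟩
  rcases (by omega : (m + 1 - b) % 3 = 0 ∨ (m + 1 - b) % 3 = 1 ∨ (m + 1 - b) % 3 = 2)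
    with h | h | h
  · exact ⟨0, 2 * b, (4 * m + 1 - 4 * b) / 3, by omega, even_two_mul b, by omega, by omega,
      by omega⟩
  · exact ⟨1, 2 * b, (4 * m - 4 * b) / 3, le_rfl, even_two_mul b, by omega, by omega, by omega⟩
  · exact ⟨0, 2 * (b - 1), (4 * m + 5 - 4 * b) / 3, by omega, even_two_mul _, by omega, by omega,
      by omega⟩

namespace Equiv.Perm

variable {α : Type*} [DecidableEq α] [Fintype α]

theorem exists_disjoint_mul_cycleType_eq {σ : Perm α} {s : Multiset ℕ} (hs : s ≤ σ.cycleType) :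
    ∃ φ τ : Perm α, φ.Disjoint τ ∧ σ = φ * τ ∧ τ.cycleType = s := by
  obtain ⟨u, hu, rfl⟩ := Multiset.exists_le_map_eq_of_le_map hs
  set F := σ.cycleFactorsFinset
  let S : Finset (Perm α) := ⟨u, Multiset.nodup_of_le hu F.nodup⟩
  have hSF : S ⊆ F := Multiset.subset_of_le hu
  have hF : (F : Set (Perm α)).Pairwise Disjoint := cycleFactorsFinset_pairwise_disjoint σ
  have hS := hF.mono (coe_subset.2 hSF)
  have hFS := hF.mono (coe_subset.2 (sdiff_subset : F \ S ⊆ F))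
  refine ⟨(F \ S).noncommProd id (hFS.imp fun _ _ => Disjoint.commute),
    S.noncommProd id (hS.imp fun _ _ => Disjoint.commute), ?_, ?_,
    cycleType_eq' S (fun f hf => (mem_cycleFactorsFinset_iff.1 (hSF hf)).1) hS rfl⟩
  · refine disjoint_noncommProd_right _ fun g hg =>
      (disjoint_noncommProd_right _ fun f hf => ?_).symm
    exact hF (hSF hg) (sdiff_subset hf) fun h => (mem_sdiff.1 hf).2 (h.trans (id_eq f) ▸ hg)
  · rw [← noncommProd_union_of_disjoint sdiff_disjoint]
    conv_lhs => rw [← cycleFactorsFinset_noncommProd σ]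
    exact noncommProd_congr (sdiff_union_of_subset hSF).symm (fun _ _ => rfl) _

theorem exists_disjoint_mul_of_le_count_two_three (σ : Perm α) {a d : ℕ} (ha : Even a)
    (ha₂ : a ≤ σ.cycleType.count 2) (hd₃ : d ≤ σ.cycleType.count 3) :
    ∃ φ τ : Perm α, φ.Disjoint τ ∧ σ = φ * τ ∧ #τ.support = 2 * a + 3 * d ∧ sign τ = 1 := by
  obtain ⟨φ, τ, hdisj, hmul, hτ⟩ := exists_disjoint_mul_cycleType_eq
    (Multiset.replicate_add_replicate_le (by decide) ha₂ hd₃)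
  refine ⟨φ, τ, hdisj, hmul, by simp [← sum_cycleType, hτ, mul_comm], ?_⟩
  rw [sign_of_cycleType, hτ]
  simp only [Multiset.sum_add, Multiset.sum_replicate, smul_eq_mul, Multiset.card_add,
    Multiset.card_replicate]
  obtain ⟨r, rfl⟩ := ha
  exact Even.neg_one_pow ⟨3 * r + 2 * d, by ring⟩

end Equiv.Perm

theorem main_decomposability_general (k l n : ℕ) (hl3 : 3 ∣ l)
    (hk : 6 ≤ k) (hn : n = 2 * k * l / 3 + 1)
    (σ : Equiv.Perm (Fin n)) (hσ : σ ∈ alternatingGroup (Fin n))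
    (hm : σ.support.card = n) (hns : n + 2 < 3 * σ.cycleFactorsFinset.card) :
    ∃ (ε : ℕ) (φ τ : Equiv.Perm (Fin n)), ε ≤ 1 ∧
      φ ∈ alternatingGroup (Fin n) ∧ τ ∈ alternatingGroup (Fin n) ∧
      φ.Disjoint τ ∧ σ = φ * τ ∧
      φ.support.card = 2 * (k - 2) * l / 3 + ε ∧
      τ.support.card = 4 * l / 3 + 1 - ε := by
  obtain ⟨m, rfl⟩ := hl3
  have hdiv (a : ℕ) : 2 * a * (3 * m) / 3 = 2 * (a * m) := by
    rw [show 2 * a * (3 * m) = 3 * (2 * (a * m)) by ring, Nat.mul_div_cancel_left _ three_pos]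
  have hkm : (k - 2) * m = k * m - 2 * m := Nat.sub_mul k 2 m
  have h6 : 6 * m ≤ k * m := Nat.mul_le_mul_right m hk
  rw [hdiv] at hn
  rw [hdiv, hkm, show 4 * (3 * m) / 3 = 4 * m by omega]
  have hcard : Multiset.card σ.cycleType = #σ.cycleFactorsFinset := Multiset.card_map _ _
  have hlen := σ.cycleType.four_mul_card_le_sum_add_count fun _ => Perm.two_le_of_mem_cycleType
  have hcount := σ.cycleType.count_add_count_le_card (by decide : 2 ≠ 3)
  rw [Perm.sum_cycleType, hm] at hlen
  obtain ⟨ε, a, d, hε, ha, ha₂, hd₃, had⟩ :=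
    Nat.exists_even_two_mul_add_three_mul_eq m (σ.cycleType.count 2) (σ.cycleType.count 3)
      (by omega) (by omega)
  obtain ⟨φ, τ, hdisj, hmul, hτcard, hτsign⟩ :=
    σ.exists_disjoint_mul_of_le_count_two_three ha ha₂ hd₃
  have hφcard := hdisj.card_support_mul
  rw [← hmul, hm] at hφcard
  rw [Perm.mem_alternatingGroup, hmul, map_mul, hτsign, mul_one] at hσ
  exact ⟨ε, φ, τ, hε, hσ, hτsign, hdisj, hmul, by omega, by omega⟩

theorem main_decomposability (k l n : ℕ) (hl : 9 ≤ l) (hl3 : 3 ∣ l)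
    (hk : 6 ≤ k) (hke : Even k) (hn : n = 2 * k * l / 3 + 1)
    (σ : Equiv.Perm (Fin n)) (hσ : σ ∈ alternatingGroup (Fin n))
    (hm : σ.support.card = n) (hns : n + 2 < 3 * σ.cycleFactorsFinset.card) :
    ∃ (ε : ℕ) (φ τ : Equiv.Perm (Fin n)), ε ≤ 1 ∧
      φ ∈ alternatingGroup (Fin n) ∧ τ ∈ alternatingGroup (Fin n) ∧
      φ.Disjoint τ ∧ σ = φ * τ ∧
      φ.support.card = 2 * (k - 2) * l / 3 + ε ∧
      τ.support.card = 4 * l / 3 + 1 - ε :=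
  main_decomposability_general k l n hl3 hk hn σ hσ hm hns
end

section
/- Let l, t be natural numbers with l ≥ 2 and t ≥ 1, and let σ ∈ S_n be a cycle of length l + (t−1)(l−1). Then σ can be written as a product of t many l-cycles of S_n. -/
open Equiv

namespace List

variable {α : Type*} [DecidableEq α]

theorem formPerm_append_cons (xs : List α) (a : α) (ys : List α) :
    formPerm (xs ++ a :: ys) = formPerm (xs ++ [a]) * formPerm (a :: ys) := by
  induction xs with
  | nil => simp
  | cons x xs ih => cases xs <;> simp_all [mul_assoc]

theorem card_support_formPerm_of_nodup [Fintype α] {l : List α} (hl : l.Nodup)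
    (hn : 2 ≤ l.length) : (formPerm l).support.card = l.length := by
  have hne : ∀ x, l ≠ [x] := by
    rintro x rfl
    simp at hn
  rw [support_formPerm_of_nodup l hl hne, toFinset_card_of_nodup hl]

end List

namespace Equiv.Perm

variable {α : Type*} [Fintype α] [DecidableEq α]

/-- Cutting the cycle `(x₁ … x_{l+m-1})` at `a = x_l` gives
`(x₁ … x_l) * (x_l … x_{l+m-1})`. -/
theorem IsCycle.exists_eq_mul {σ : Perm α} (hσ : σ.IsCycle) {l m : ℕ} (hl : 2 ≤ l) (hm : 2 ≤ m)
    (hcard : σ.support.card + 1 = l + m) :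
    ∃ τ ρ : Perm α, τ.IsCycle ∧ τ.support.card = l ∧ ρ.IsCycle ∧ ρ.support.card = m ∧
      σ = τ * ρ := by
  obtain ⟨x, hx⟩ := hσ.nonempty_support
  set L := σ.toList x
  have hcycleOf : σ.cycleOf x = σ := hσ.cycleOf_eq (mem_support.mp hx)
  have hLσ : L.formPerm = σ := by rw [formPerm_toList, hcycleOf]
  have hLlen : L.length = σ.support.card := by rw [length_toList, hcycleOf]
  obtain ⟨xs, a, ys, hsplit, hxs, hys⟩ :
      ∃ xs a ys, L = xs ++ a :: ys ∧ xs.length = l - 1 ∧ ys.length = m - 1 := by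
    have hlt : l - 1 < L.length := by omega
    refine ⟨L.take (l - 1), L[l - 1], L.drop l, ?_, by rw [List.length_take]; omega,
      by rw [List.length_drop]; omega⟩
    conv_lhs => rw [← L.take_append_drop (l - 1), List.drop_eq_getElem_cons hlt]
    rw [Nat.sub_add_cancel (by omega)]
  have hnd : (xs ++ a :: ys).Nodup := hsplit ▸ nodup_toList σ x
  have hτ : (xs ++ [a]).Nodup := hnd.sublist (by simp)
  have hρ : (a :: ys).Nodup := hnd.sublist (by simp)
  have hτlen : (xs ++ [a]).length = l := by
    rw [List.length_append, List.length_singleton]; omega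
  have hρlen : (a :: ys).length = m := by rw [List.length_cons]; omega
  refine ⟨_, _, List.isCycle_formPerm hτ (by omega), ?_,
    List.isCycle_formPerm hρ (by omega), ?_, ?_⟩
  · rw [List.card_support_formPerm_of_nodup hτ (by omega), hτlen]
  · rw [List.card_support_formPerm_of_nodup hρ (by omega), hρlen]
  · rw [← List.formPerm_append_cons, ← hsplit, hLσ]

end Equiv.Perm

theorem isProdOfCycles_one {n l : ℕ} {σ : Perm (Fin n)} (hσ : σ.IsCycle)
    (hcard : σ.support.card = l) : IsProdOfCycles n 1 l σ :=
  ⟨fun _ => σ, fun _ => ⟨hσ, hcard⟩, by simp⟩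

theorem IsProdOfCycles.cycle_mul {n k l : ℕ} {τ ρ : Perm (Fin n)} (hτ : τ.IsCycle)
    (hτcard : τ.support.card = l) (hρ : IsProdOfCycles n k l ρ) :
    IsProdOfCycles n (k + 1) l (τ * ρ) := by
  obtain ⟨c, hc, rfl⟩ := hρ
  refine ⟨Fin.cons τ c, Fin.cases ⟨hτ, hτcard⟩ hc, ?_⟩
  simp [List.ofFn_succ]

theorem cycle_as_product_of_cycles (n l t : ℕ) (hl : 2 ≤ l) (ht : 1 ≤ t)
    (σ : Equiv.Perm (Fin n)) (hσ : σ.IsCycle)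
    (hlen : σ.support.card = l + (t - 1) * (l - 1)) :
    IsProdOfCycles n t l σ := by
  induction t, ht using Nat.le_induction generalizing σ with
  | base => exact isProdOfCycles_one hσ (by simpa using hlen)
  | succ t ht ih =>
    have hmul : t * (l - 1) = (t - 1) * (l - 1) + (l - 1) := by
      rw [← Nat.succ_mul, Nat.succ_eq_add_one, Nat.sub_add_cancel ht]
    obtain ⟨τ, ρ, hτ, hτcard, hρ, hρcard, rfl⟩ :=
      hσ.exists_eq_mul (m := l + (t - 1) * (l - 1)) hl (by omega) (by rw [Nat.add_sub_cancel] at hlen; omega)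
    exact (ih ρ hρ hρcard).cycle_mul hτ hτcard
end

section
/- Let k, l ≥ 2 and n ≥ 4 be natural numbers. If k is even and 2 ≤ l ≤ n−1, then every element of A_n that is a product of k many l-cycles of S_n is also a product of k many (l+1)-cycles of S_n. If k is odd and 2 ≤ l ≤ n−2, then every element of A_n that is a product of k many l-cycles of S_n is also a product of k many (l+2)-cycles of S_n. -/
/-!
If `a` is moved by a cycle `c` and `b` is not, then `swap b a * c` and `c * swap b a` are cycles
moving one more point. For two cycles `c₁, c₂` that are not full, `a, b` can be chosen so that
this works for both at once, and `c₁ * c₂ = (c₁ * swap b a) * (swap b a * c₂)`: a product of two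
cycles can be lengthened by one, which settles even `k`. For odd `k` a triple `c₁ c₂ c₃` is
lengthened by two: lengthen `c₂ c₃ = d₂ d₃`, then `c₁ d₂ = f₁ f₂`, then `f₁ d₃ = g₁ g₂`, so that
`c₁ c₂ c₃ = (f₁ f₂ f₁⁻¹) g₁ g₂`.
-/

open Equiv

open Finset Pointwise

theorem Finset.exists_mem_notMem_mem_iff_notMem {α : Type*} [Fintype α] {s t : Finset α}
    (hs : s.Nonempty) (hs' : s ≠ univ) (ht : t.Nonempty) (ht' : t ≠ univ) :
    ∃ x ∈ s, ∃ y ∉ s, (x ∈ t ↔ y ∉ t) := by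
  obtain ⟨y, hy⟩ : ∃ y, y ∉ s := by simpa [eq_univ_iff_forall] using hs'
  obtain ⟨z, hz⟩ : ∃ z, z ∉ t := by simpa [eq_univ_iff_forall] using ht'
  by_cases hdisj : Disjoint s t
  · obtain ⟨x, hx⟩ := hs
    obtain ⟨w, hw⟩ := ht
    exact ⟨x, hx, w, disjoint_right.mp hdisj hw, by simp [disjoint_left.mp hdisj hx, hw]⟩
  obtain ⟨x, hxs, hxt⟩ := not_disjoint_iff.mp hdisj
  by_cases hyt : y ∈ t
  · by_cases hzs : z ∈ s
    · exact ⟨z, hzs, y, hy, by simp [hz, hyt]⟩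
    · exact ⟨x, hxs, z, hzs, by simp [hxt, hz]⟩
  · exact ⟨x, hxs, y, hy, by simp [hxt, hyt]⟩

namespace Equiv.Perm

variable {α : Type*} [Fintype α] [DecidableEq α]

def cyclesOfLength (l : ℕ) : Set (Perm α) := {c | c.IsCycle ∧ #c.support = l}

theorem IsCycle.swap_mul_eq_formPerm {c : Perm α} (hc : c.IsCycle) {a : α} (ha : a ∈ c.support)
    (b : α) : swap b a * c = (b :: c.toList a).formPerm := by
  obtain ⟨x, rest, hxr⟩ :=
    List.exists_cons_of_ne_nil (toList_eq_nil_iff.not.mpr (not_not.mpr ha))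
  have hx : x = a := by simpa [hxr] using toList_getElem_zero c a ha
  subst hx
  rw [hxr, List.formPerm_cons_cons, ← hxr, formPerm_toList, hc.cycleOf_eq (mem_support.mp ha)]

variable {l : ℕ} {c : Perm α}

theorem swap_mul_mem_cyclesOfLength (hc : c ∈ cyclesOfLength l) {a b : α} (ha : a ∈ c.support)
    (hb : b ∉ c.support) : swap b a * c ∈ cyclesOfLength (l + 1) := by
  have hnodup : (b :: c.toList a).Nodup :=
    List.nodup_cons.mpr
      ⟨fun h ↦ hb ((mem_toList_iff.mp h).1.mem_support_iff.mp ha), nodup_toList c a⟩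
  have hlength : (b :: c.toList a).length = l + 1 := by
    rw [List.length_cons, length_toList, hc.1.cycleOf_eq (mem_support.mp ha), hc.2]
  have hl : 2 ≤ l := hc.2 ▸ hc.1.two_le_card_support
  rw [hc.1.swap_mul_eq_formPerm ha]
  refine ⟨List.isCycle_formPerm hnodup (by omega), ?_⟩
  rw [List.support_formPerm_of_nodup _ hnodup (fun x h ↦ by simp [h] at hlength; omega),
    List.toFinset_card_of_nodup hnodup, hlength]

theorem inv_mem_cyclesOfLength (hc : c ∈ cyclesOfLength l) : c⁻¹ ∈ cyclesOfLength l :=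
  ⟨hc.1.inv, by rw [support_inv]; exact hc.2⟩

theorem conj_mem_cyclesOfLength (hc : c ∈ cyclesOfLength l) (g : Perm α) :
    g * c * g⁻¹ ∈ cyclesOfLength l :=
  ⟨hc.1.conj, by rw [card_support_conj]; exact hc.2⟩

theorem mul_swap_mem_cyclesOfLength (hc : c ∈ cyclesOfLength l) {a b : α} (ha : a ∈ c.support)
    (hb : b ∉ c.support) : c * swap b a ∈ cyclesOfLength (l + 1) := by
  have h := inv_mem_cyclesOfLength <| swap_mul_mem_cyclesOfLength (inv_mem_cyclesOfLength hc)
    (by rwa [support_inv]) (by rwa [support_inv])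
  simpa [mul_inv_rev, swap_inv] using h

theorem cyclesOfLength_mul_subset {i j : ℕ} (hi : i < Fintype.card α) (hj : j < Fintype.card α) :
    cyclesOfLength i * cyclesOfLength j ⊆
      (cyclesOfLength (i + 1) * cyclesOfLength (j + 1) : Set (Perm α)) := by
  intro σ hσ
  obtain ⟨c₁, hc₁, c₂, hc₂, rfl⟩ := Set.mem_mul.mp hσ
  have support_ne_univ {c : Perm α} {m : ℕ} (hc : c ∈ cyclesOfLength m)
      (hm : m < Fintype.card α) : c.support ≠ univ := by
    rw [← card_lt_iff_ne_univ, hc.2]; exact hm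
  obtain ⟨x, hx₁, y, hy₁, hxy₂⟩ := exists_mem_notMem_mem_iff_notMem hc₁.1.nonempty_support
    (support_ne_univ hc₁ hi) hc₂.1.nonempty_support (support_ne_univ hc₂ hj)
  refine Set.mem_mul.mpr
    ⟨c₁ * swap y x, mul_swap_mem_cyclesOfLength hc₁ hx₁ hy₁, swap y x * c₂, ?_, ?_⟩
  · by_cases hx₂ : x ∈ c₂.support
    · exact swap_mul_mem_cyclesOfLength hc₂ hx₂ (hxy₂.mp hx₂)
    · rw [swap_comm]
      exact swap_mul_mem_cyclesOfLength hc₂ (not_not.mp (hxy₂.not.mp hx₂)) hx₂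
  · simp only [mul_assoc, swap_mul_self_mul]

theorem cyclesOfLength_pow_three_subset (hl : l + 2 ≤ Fintype.card α) :
    cyclesOfLength l ^ 3 ⊆ (cyclesOfLength (l + 2) ^ 3 : Set (Perm α)) := by
  rw [pow_three, pow_three]
  intro σ hσ
  obtain ⟨c₁, hc₁, c₂₃, hc₂₃, rfl⟩ := Set.mem_mul.mp hσ
  obtain ⟨d₂, hd₂, d₃, hd₃, h₂₃⟩ :=
    Set.mem_mul.mp (cyclesOfLength_mul_subset (by omega) (by omega) hc₂₃)
  obtain ⟨f₁, hf₁, f₂, hf₂, h₁₂⟩ := Set.mem_mul.mp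
    (cyclesOfLength_mul_subset (by omega) (by omega) (Set.mul_mem_mul hc₁ hd₂))
  obtain ⟨g₁, hg₁, g₂, hg₂, h₁₃⟩ := Set.mem_mul.mp
    (cyclesOfLength_mul_subset (by omega) (by omega) (Set.mul_mem_mul hf₁ hd₃))
  refine Set.mem_mul.mpr
    ⟨f₁ * f₂ * f₁⁻¹, conj_mem_cyclesOfLength hf₂ f₁, g₁ * g₂, Set.mul_mem_mul hg₁ hg₂, ?_⟩
  calc f₁ * f₂ * f₁⁻¹ * (g₁ * g₂) = f₁ * f₂ * d₃ := by rw [h₁₃]; group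
    _ = c₁ * c₂₃ := by rw [h₁₂, mul_assoc, h₂₃]

theorem cyclesOfLength_pow_subset_succ {k : ℕ} (hl : l < Fintype.card α) (hk : Even k) :
    cyclesOfLength l ^ k ⊆ (cyclesOfLength (l + 1) ^ k : Set (Perm α)) := by
  obtain ⟨m, rfl⟩ := hk
  rw [← two_mul, pow_mul, pow_mul, sq, sq]
  exact Set.pow_subset_pow_left (cyclesOfLength_mul_subset hl hl)

theorem cyclesOfLength_pow_subset_add_two {k : ℕ} (hl : l + 2 ≤ Fintype.card α) (hk : Odd k)
    (hk₃ : 3 ≤ k) : cyclesOfLength l ^ k ⊆ (cyclesOfLength (l + 2) ^ k : Set (Perm α)) := by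
  obtain ⟨m, rfl⟩ : ∃ m, k = 3 + 2 * m := ⟨(k - 3) / 2, by obtain ⟨r, rfl⟩ := hk; omega⟩
  rw [pow_add, pow_add]
  exact Set.mul_subset_mul (cyclesOfLength_pow_three_subset hl) <|
    (cyclesOfLength_pow_subset_succ (by omega) (even_two_mul m)).trans
      (cyclesOfLength_pow_subset_succ (by omega) (even_two_mul m))

end Equiv.Perm

open Equiv.Perm

theorem isProdOfCycles_iff_mem_pow {n k l : ℕ} {σ : Perm (Fin n)} :
    IsProdOfCycles n k l σ ↔ σ ∈ cyclesOfLength l ^ k := by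
  rw [Set.mem_pow]
  constructor
  · rintro ⟨c, hc, rfl⟩
    exact ⟨fun i ↦ ⟨c i, hc i⟩, rfl⟩
  · rintro ⟨c, rfl⟩
    exact ⟨fun i ↦ c i, fun i ↦ (c i).2, rfl⟩

theorem lengthening_of_cycles_general (k l n : ℕ) (hk : 2 ≤ k) (hl : 2 ≤ l) :
    (Even k → l ≤ n - 1 →
      ∀ σ ∈ alternatingGroup (Fin n),
        IsProdOfCycles n k l σ → IsProdOfCycles n k (l + 1) σ) ∧
    (Odd k → l ≤ n - 2 →
      ∀ σ ∈ alternatingGroup (Fin n),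
        IsProdOfCycles n k l σ → IsProdOfCycles n k (l + 2) σ) := by
  simp only [isProdOfCycles_iff_mem_pow]
  refine ⟨fun hk_even hln σ _ hσ ↦ ?_, fun hk_odd hln σ _ hσ ↦ ?_⟩
  · exact cyclesOfLength_pow_subset_succ (by rw [Fintype.card_fin]; omega) hk_even hσ
  · have hk₃ : 3 ≤ k := by obtain ⟨r, rfl⟩ := hk_odd; omega
    exact cyclesOfLength_pow_subset_add_two (by rw [Fintype.card_fin]; omega) hk_odd hk₃ hσ

theorem lengthening_of_cycles (k l n : ℕ) (hk : 2 ≤ k) (hl : 2 ≤ l) (hn : 4 ≤ n) :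
    (Even k → l ≤ n - 1 →
      ∀ σ ∈ alternatingGroup (Fin n),
        IsProdOfCycles n k l σ → IsProdOfCycles n k (l + 1) σ) ∧
    (Odd k → l ≤ n - 2 →
      ∀ σ ∈ alternatingGroup (Fin n),
        IsProdOfCycles n k l σ → IsProdOfCycles n k (l + 2) σ) :=
  lengthening_of_cycles_general k l n hk hl
end

section
/- Let n be an even integer and let σ ∈ S_n satisfy 3·n_σ > n + 1. Then for each even integer m with 2 ≤ m ≤ n − 2, there exist non-trivial permutations ρ and φ in S_n with disjoint supports such that σ = ρφ, |supp(ρ)| ≤ m, and |supp(φ)| ≤ n − m. -/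
/-!
The cycles of `σ` have lengths `ℓ ≥ 2` summing to at most `n`, and `3 n_σ > n + 1` says their
average length is below `3`. It suffices to split the cycles into two nonempty groups of total
length at most `m` and `n - m`. If the total is even, every even number up to it is the total of
some group: peel off a block consisting of one even cycle of length `≥ 4` or of two odd cycles.
A block has average length at most `3`, so the slack `3 n_σ - total` survives, and the slack also
makes the block at most `2` longer than the rest, so the even totals reachable without the block
and those reachable with it overlap. An odd total is made even by lengthening one odd cycle by one.
-/

open Equiv

open Finset

section SubsetSums

variable {ι : Type*} (f : ι → ℕ)

def AllEvenSubsetSums (F : Finset ι) : Prop :=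
  ∀ t, Even t → t ≤ ∑ x ∈ F, f x → ∃ S ⊆ F, ∑ x ∈ S, f x = t

variable {f}

theorem allEvenSubsetSums_of_forall_eq_two {F : Finset ι} (h : ∀ x ∈ F, f x = 2) :
    AllEvenSubsetSums f F := by
  have sum_eq : ∀ S ⊆ F, ∑ x ∈ S, f x = 2 * #S := fun S hS => by
    rw [sum_congr rfl fun x hx => h x (hS hx), sum_const, smul_eq_mul, mul_comm]
  rintro t ⟨u, rfl⟩ ht
  obtain ⟨S, hSF, hS⟩ := exists_subset_card_eq (s := F) (n := u)
    (by rw [sum_eq F subset_rfl] at ht; omega)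
  exact ⟨S, hSF, by rw [sum_eq S hSF, hS]; ring⟩

variable [DecidableEq ι]

theorem AllEvenSubsetSums.of_sdiff {F R : Finset ι} (hRF : R ⊆ F)
    (hR : Even (∑ x ∈ R, f x)) (hR_le : ∑ x ∈ R, f x ≤ ∑ x ∈ F \ R, f x + 2)
    (h : AllEvenSubsetSums f (F \ R)) : AllEvenSubsetSums f F := by
  intro t ht htF
  have hsplit : ∑ x ∈ F \ R, f x + ∑ x ∈ R, f x = ∑ x ∈ F, f x := sum_sdiff hRF
  by_cases hsmall : t ≤ ∑ x ∈ F \ R, f x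
  · obtain ⟨S, hS, hSt⟩ := h t ht hsmall
    exact ⟨S, hS.trans sdiff_subset, hSt⟩
  have hRt : ∑ x ∈ R, f x ≤ t := by
    obtain ⟨a, ha⟩ := ht; obtain ⟨b, hb⟩ := hR; omega
  obtain ⟨S, hS, hSt⟩ := h (t - ∑ x ∈ R, f x) (ht.tsub hR) (by omega)
  refine ⟨S ∪ R, union_subset (hS.trans sdiff_subset) hRF, ?_⟩
  rw [sum_union (disjoint_of_subset_left hS sdiff_disjoint), hSt]
  omega

theorem exists_even_block {F : Finset ι} (h2 : ∀ x ∈ F, 2 ≤ f x)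
    (heven : Even (∑ x ∈ F, f x)) {x : ι} (hx : x ∈ F) (hx2 : f x ≠ 2) :
    ∃ R ⊆ F, R.Nonempty ∧ #R ≤ 2 ∧ 3 * #R ≤ ∑ y ∈ R, f y ∧ Even (∑ y ∈ R, f y) := by
  rcases Nat.even_or_odd (f x) with hxe | hxo
  · refine ⟨{x}, singleton_subset_iff.2 hx, singleton_nonempty x, by simp, ?_, by simpa⟩
    obtain ⟨a, ha⟩ := hxe
    have := h2 x hx
    simp only [card_singleton, sum_singleton]
    omega
  · have hodd : Even #{y ∈ F | Odd (f y)} := (even_sum_iff_even_card_odd f).1 heven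
    have hx_mem : x ∈ {y ∈ F | Odd (f y)} := mem_filter.2 ⟨hx, hxo⟩
    obtain ⟨y, hy, hyx⟩ := exists_mem_ne (s := {y ∈ F | Odd (f y)})
      (by obtain ⟨a, ha⟩ := hodd; have := card_pos.2 ⟨x, hx_mem⟩; omega) x
    obtain ⟨hyF, hyo⟩ := mem_filter.1 hy
    refine ⟨{x, y}, insert_subset hx (singleton_subset_iff.2 hyF), insert_nonempty x {y},
      by simp [hyx.symm], ?_, by rw [sum_pair hyx.symm]; exact hxo.add_odd hyo⟩
    rw [card_pair hyx.symm, sum_pair hyx.symm]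
    have := h2 x hx; have := h2 y hyF
    obtain ⟨a, ha⟩ := hxo; obtain ⟨b, hb⟩ := hyo
    omega

theorem allEvenSubsetSums_of_sum_add_two_le {F : Finset ι} (h2 : ∀ x ∈ F, 2 ≤ f x)
    (hF : ∑ x ∈ F, f x + 2 ≤ 3 * #F) (heven : Even (∑ x ∈ F, f x)) :
    AllEvenSubsetSums f F := by
  induction F using Finset.strongInduction with
  | H F ih =>
  by_cases htwo : ∀ x ∈ F, f x = 2
  · exact allEvenSubsetSums_of_forall_eq_two htwo
  push Not at htwo
  obtain ⟨x, hx, hx2⟩ := htwo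
  obtain ⟨R, hRF, hRne, hRcard, hR3, hReven⟩ := exists_even_block h2 heven hx hx2
  have h2' : ∀ y ∈ F \ R, 2 ≤ f y := fun y hy => h2 y (mem_sdiff.1 hy).1
  have hsum : ∑ y ∈ F \ R, f y + ∑ y ∈ R, f y = ∑ y ∈ F, f y := sum_sdiff hRF
  have hcard : #(F \ R) + #R = #F := card_sdiff_add_card_eq_card hRF
  have hlow : #(F \ R) * 2 ≤ ∑ y ∈ F \ R, f y := card_nsmul_le_sum _ _ _ h2'
  have hRpos := card_pos.2 hRne
  rw [← hsum] at heven
  exact AllEvenSubsetSums.of_sdiff hRF hReven (by omega)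
    (ih _ (sdiff_ssubset hRF hRne) h2' (by omega) ((Nat.even_add.1 heven).2 hReven))

theorem exists_split_of_even {F : Finset ι} (h2 : ∀ x ∈ F, 2 ≤ f x)
    (heven : Even (∑ x ∈ F, f x)) (hF : ∑ x ∈ F, f x + 2 ≤ 3 * #F) {A B : ℕ}
    (hA : Even A) (hA2 : 2 ≤ A) (hB2 : 2 ≤ B) (hAB : ∑ x ∈ F, f x ≤ A + B) :
    ∃ S ⊆ F, 0 < ∑ x ∈ S, f x ∧ ∑ x ∈ S, f x ≤ A ∧
      0 < ∑ x ∈ F \ S, f x ∧ ∑ x ∈ F \ S, f x ≤ B := by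
  have hlow : #F * 2 ≤ ∑ x ∈ F, f x := card_nsmul_le_sum _ _ _ h2
  by_cases hsmall : ∑ x ∈ F, f x ≤ A + 2
  · obtain ⟨z, hz, hz2⟩ : ∃ z ∈ F, f z = 2 := by
      by_contra! hne
      have : #F * 3 ≤ ∑ x ∈ F, f x :=
        card_nsmul_le_sum _ _ 3 fun x hx => by have := h2 x hx; have := hne x hx; omega
      omega
    have hsum : ∑ x ∈ F.erase z, f x + f z = ∑ x ∈ F, f x := sum_erase_add F f hz
    refine ⟨F.erase z, erase_subset z F, ?_⟩
    rw [sdiff_erase_self hz, sum_singleton]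
    exact ⟨by omega, by omega, by omega, by omega⟩
  · obtain ⟨S, hS, hSA⟩ :=
      allEvenSubsetSums_of_sum_add_two_le h2 hF heven A hA (by omega)
    have hsum : ∑ x ∈ F \ S, f x + ∑ x ∈ S, f x = ∑ x ∈ F, f x := sum_sdiff hS
    exact ⟨S, hS, by omega, by omega, by omega, by omega⟩

theorem exists_split {F : Finset ι} (h2 : ∀ x ∈ F, 2 ≤ f x) {A B : ℕ}
    (hA : Even A) (hB : Even B) (hA2 : 2 ≤ A) (hB2 : 2 ≤ B)
    (hAB : ∑ x ∈ F, f x ≤ A + B) (hF : A + B + 1 < 3 * #F) :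
    ∃ S ⊆ F, 0 < ∑ x ∈ S, f x ∧ ∑ x ∈ S, f x ≤ A ∧
      0 < ∑ x ∈ F \ S, f x ∧ ∑ x ∈ F \ S, f x ≤ B := by
  rcases Nat.even_or_odd (∑ x ∈ F, f x) with heven | hodd
  · exact exists_split_of_even h2 heven (by omega) hA hA2 hB2 hAB
  obtain ⟨x, hx⟩ : {y ∈ F | Odd (f y)}.Nonempty :=
    card_pos.1 ((odd_sum_iff_odd_card_odd f).1 hodd).pos
  set g : ι → ℕ := fun y => f y + if y = x then 1 else 0
  have hfg : ∀ y, f y ≤ g y := fun y => Nat.le_add_right _ _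
  have hgsum : ∑ y ∈ F, g y = ∑ y ∈ F, f y + 1 := by
    simp only [g, sum_add_distrib, sum_ite_eq', if_pos (mem_filter.1 hx).1]
  have hAB' : ∑ y ∈ F, f y + 1 ≤ A + B := by
    obtain ⟨a, ha⟩ := hodd; obtain ⟨b, hb⟩ := hA; obtain ⟨c, hc⟩ := hB; omega
  obtain ⟨S, hS, hSpos, hSA, hTpos, hTB⟩ :=
    exists_split_of_even (f := g) (fun y hy => (h2 y hy).trans (hfg y))
      (by rw [hgsum]; exact hodd.add_one) (by omega) hA hA2 hB2 (by omega)
  have pos_of_pos : ∀ T ⊆ F, 0 < ∑ y ∈ T, g y → 0 < ∑ y ∈ T, f y := fun T hT hg =>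
    sum_pos (fun y hy => by have := h2 y (hT hy); omega) (nonempty_of_sum_ne_zero hg.ne')
  exact ⟨S, hS, pos_of_pos S hS hSpos, (sum_le_sum fun y _ => hfg y).trans hSA,
    pos_of_pos _ sdiff_subset hTpos, (sum_le_sum fun y _ => hfg y).trans hTB⟩

end SubsetSums

namespace Equiv.Perm

variable {α : Type*} [DecidableEq α] [Fintype α]

theorem card_support_noncommProd {ι : Type*} {k : ι → Perm α} {s : Finset ι}
    (hs : (s : Set ι).Pairwise fun i j => Disjoint (k i) (k j)) :
    #(s.noncommProd k (hs.imp fun _ _ => Disjoint.commute)).support =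
      ∑ i ∈ s, #(k i).support := by
  rw [support_noncommProd hs, card_biUnion]
  exact fun i hi j hj hij => (hs hi hj hij).disjoint_support

theorem sum_card_support_cycleFactorsFinset (σ : Perm α) :
    ∑ c ∈ σ.cycleFactorsFinset, #c.support = #σ.support := by
  rw [← sum_cycleType, cycleType_def]
  rfl

theorem exists_disjoint_mul_eq_of_subset_cycleFactorsFinset {σ : Perm α} {S : Finset (Perm α)}
    (hS : S ⊆ σ.cycleFactorsFinset) :
    ∃ ρ φ : Perm α, ρ.Disjoint φ ∧ σ = ρ * φ ∧ #ρ.support = ∑ c ∈ S, #c.support ∧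
      #φ.support = ∑ c ∈ σ.cycleFactorsFinset \ S, #c.support := by
  have hdisj := σ.cycleFactorsFinset_pairwise_disjoint
  have hSd : (S : Set (Perm α)).Pairwise fun a b => Disjoint (id a) (id b) :=
    hdisj.mono (coe_subset.2 hS)
  have hTd : ((σ.cycleFactorsFinset \ S : Finset (Perm α)) : Set (Perm α)).Pairwise
      fun a b => Disjoint (id a) (id b) := hdisj.mono (coe_subset.2 sdiff_subset)
  refine ⟨_, _, ?_, ?_, card_support_noncommProd hSd, card_support_noncommProd hTd⟩
  · refine disjoint_noncommProd_right _ fun d hd => (disjoint_noncommProd_right _ fun c hc =>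
      hdisj ((mem_sdiff.1 hd).1) (hS hc) ?_).symm
    rintro rfl
    exact (mem_sdiff.1 hd).2 hc
  · have hcomm : ((S ∪ (σ.cycleFactorsFinset \ S) : Finset (Perm α)) : Set (Perm α)).Pairwise
        (Function.onFun Commute id) := by
      rw [union_sdiff_of_subset hS]
      exact σ.cycleFactorsFinset_mem_commute
    calc σ = σ.cycleFactorsFinset.noncommProd id σ.cycleFactorsFinset_mem_commute :=
          (cycleFactorsFinset_noncommProd σ).symm
      _ = (S ∪ (σ.cycleFactorsFinset \ S)).noncommProd id hcomm := by
          congr 1; rw [union_sdiff_of_subset hS]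
      _ = _ := noncommProd_union_of_disjoint disjoint_sdiff id hcomm

end Equiv.Perm

theorem secondary_decomposability (n : ℕ) (hne : Even n)
    (σ : Equiv.Perm (Fin n)) (hns : n + 1 < 3 * σ.cycleFactorsFinset.card) :
    ∀ m : ℕ, Even m → 2 ≤ m → m ≤ n - 2 →
      ∃ ρ φ : Equiv.Perm (Fin n), ρ ≠ 1 ∧ φ ≠ 1 ∧ ρ.Disjoint φ ∧
        σ = ρ * φ ∧ ρ.support.card ≤ m ∧ φ.support.card ≤ n - m := by
  intro m hm hm2 hmn
  have hcycle : ∀ c ∈ σ.cycleFactorsFinset, 2 ≤ #c.support := fun c hc =>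
    (Perm.mem_cycleFactorsFinset_iff.1 hc).1.two_le_card_support
  have hsum : ∑ c ∈ σ.cycleFactorsFinset, #c.support ≤ m + (n - m) := by
    rw [Perm.sum_card_support_cycleFactorsFinset]
    have := card_le_univ σ.support
    simp only [Fintype.card_fin] at this
    omega
  obtain ⟨S, hS, hSpos, hSm, hTpos, hTm⟩ :=
    exists_split hcycle hm (hne.tsub hm) hm2 (by omega) hsum (by omega)
  obtain ⟨ρ, φ, hdisj, hσ, hρ, hφ⟩ := Perm.exists_disjoint_mul_eq_of_subset_cycleFactorsFinset hS
  refine ⟨ρ, φ, ?_, ?_, hdisj, hσ, hρ ▸ hSm, hφ ▸ hTm⟩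
  · rintro rfl
    simp only [Perm.support_one, card_empty] at hρ
    omega
  · rintro rfl
    simp only [Perm.support_one, card_empty] at hφ
    omega
end
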